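/- arXiv:2412.05406 — 5 statements merged into one kernel-verified Lean document; each statement's English description precedes it below -/
import Mathlib

section
/- Let f be a generalised arrangement of n pseudolines. If there exist indices i ≠ j and two intersection points x₁, x₂ ∈ Z(i,j) whose levels differ (the number of indices k ∉ {i,j} with f k x₁ > f i x₁ is different from the number of indices k ∉ {i,j} with f k x₂ > f i x₂), then D(f) is not a Condorcet domain. -/
open Set

/-- `r` is a (strict) linear order: irreflexive, transitive and total. -/
def IsLinOrder {A : Type*} (r : A → A → Prop) : Prop :=
  IsStrictTotalOrder A r

/-- Strict pairwise majority relation of a profile `P` of `m` orders: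
`a` is majority-preferred to `b` if more orders in the profile rank `a` above `b`
than rank `b` above `a`. -/
def MajPrefers {A : Type*} {m : ℕ} (P : Fin m → (A → A → Prop)) (a b : A) : Prop :=
  Nat.card {i : Fin m // P i a b} > Nat.card {i : Fin m // P i b a}

/-- `D` is a Condorcet domain: every profile of an odd number of (not necessarily
distinct) orders from `D` has a transitive strict pairwise majority relation. -/
def IsCondorcet {A : Type*} (D : Set (A → A → Prop)) : Prop :=
  ∀ (m : ℕ) (P : Fin m → (A → A → Prop)), Odd m → (∀ i, P i ∈ D) →
    Transitive (MajPrefers P)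

/-- `D` is a maximal Condorcet domain: it is Condorcet, and no set of linear
orders strictly containing it is Condorcet. -/
def IsMaximalCondorcet {A : Type*} (D : Set (A → A → Prop)) : Prop :=
  IsCondorcet D ∧
    ∀ D' : Set (A → A → Prop), (∀ r ∈ D', IsLinOrder r) → D ⊂ D' → ¬ IsCondorcet D'

/-- Never-top condition for `x` on the triple `T`: no order in `D` ranks `x`
above both other elements of `T`. -/
def NeverTop {A : Type*} (D : Set (A → A → Prop)) (T : Finset A) (x : A) : Prop :=
  ∀ p ∈ D, ¬ (∀ y ∈ T, y ≠ x → p x y)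

/-- Never-bottom condition for `x` on the triple `T`: no order in `D` ranks `x`
below both other elements of `T`. -/
def NeverBottom {A : Type*} (D : Set (A → A → Prop)) (T : Finset A) (x : A) : Prop :=
  ∀ p ∈ D, ¬ (∀ y ∈ T, y ≠ x → p y x)

/-- Never-middle condition for `x` on the triple `T`: no order in `D` ranks `x`
between the two other elements of `T`. -/
def NeverMiddle {A : Type*} (D : Set (A → A → Prop)) (T : Finset A) (x : A) : Prop :=
  ∀ p ∈ D, ¬ (∃ y ∈ T, ∃ z ∈ T, y ≠ x ∧ z ≠ x ∧ p y x ∧ p x z)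

/-- `D` is peak-pit: every triple has an alternative that is never-top or never-bottom. -/
def IsPeakPit {A : Type*} (D : Set (A → A → Prop)) : Prop :=
  ∀ T : Finset A, T.card = 3 → ∃ x ∈ T, NeverTop D T x ∨ NeverBottom D T x

/-- `D` is Arrow's single-peaked: every triple has a never-bottom alternative. -/
def IsArrowSP {A : Type*} (D : Set (A → A → Prop)) : Prop :=
  ∀ T : Finset A, T.card = 3 → ∃ x ∈ T, NeverBottom D T x

/-- `D` has maximal width: it contains two completely reversed linear orders. -/
def HasMaximalWidth {A : Type*} (D : Set (A → A → Prop)) : Prop :=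
  ∃ p ∈ D, (fun a b => p b a) ∈ D

/-- A generalised arrangement of `n` pseudolines: continuous functions on `[0,1]`,
starting (at `0`) in strictly decreasing order of index, ending (at `1`) at pairwise
distinct values; every two of them intersect in a finite set of interior points, at
each of which their difference changes sign; and no three share a common point. -/
structure GenArrangement (n : ℕ) where
  line : Fin n → ℝ → ℝ
  continuous : ∀ i, ContinuousOn (line i) (Set.Icc (0:ℝ) 1)
  start_anti : ∀ i j : Fin n, i < j → line j 0 < line i 0
  end_distinct : ∀ i j : Fin n, i ≠ j → line i 1 ≠ line j 1
  inter_finite : ∀ i j : Fin n, i ≠ j →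
    {x : ℝ | x ∈ Set.Ioo (0:ℝ) 1 ∧ line i x = line j x}.Finite
  sign_change : ∀ i j : Fin n, i ≠ j → ∀ x ∈ Set.Ioo (0:ℝ) 1, line i x = line j x →
    ∃ ε > 0, Set.Ioo (x - ε) (x + ε) ⊆ Set.Ioo (0:ℝ) 1 ∧
      ∀ y ∈ Set.Ioo (x - ε) x, ∀ z ∈ Set.Ioo x (x + ε),
        (line i y - line j y) * (line i z - line j z) < 0
  no_triple : ∀ i j k : Fin n, i ≠ j → j ≠ k → i ≠ k → ∀ x ∈ Set.Icc (0:ℝ) 1,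
    ¬ (line i x = line j x ∧ line j x = line k x)

namespace GenArrangement

/-- The set `Z(i,j)` of interior intersection points of pseudolines `i` and `j`. -/
def Z {n : ℕ} (g : GenArrangement n) (i j : Fin n) : Set ℝ :=
  {x : ℝ | x ∈ Set.Ioo (0:ℝ) 1 ∧ g.line i x = g.line j x}

/-- The level of an intersection point `x ∈ Z(i,j)`: the number of indices
`k ∉ {i,j}` with `f k x > f i x`. -/
noncomputable def level {n : ℕ} (g : GenArrangement n) (i j : Fin n) (x : ℝ) : ℕ :=
  Nat.card {k : Fin n // k ≠ i ∧ k ≠ j ∧ g.line i x < g.line k x}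

/-- `g` is tame: for every pair of pseudolines, all their intersection points
are at the same level. -/
def Tame {n : ℕ} (g : GenArrangement n) : Prop :=
  ∀ i j : Fin n, i ≠ j → ∀ x₁ ∈ g.Z i j, ∀ x₂ ∈ g.Z i j,
    g.level i j x₁ = g.level i j x₂

/-- `g` is a classical (simple) arrangement: every two pseudolines cross exactly once. -/
def IsClassical {n : ℕ} (g : GenArrangement n) : Prop :=
  ∀ i j : Fin n, i ≠ j → ∃ x : ℝ, g.Z i j = {x}

/-- `S` is a chamber set of `g`: for some `x ∈ [0,1]` and level `y` avoiding all
the lines, `S` is the set of lines passing above the point `(x, y)`. -/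
def IsChamberSet {n : ℕ} (g : GenArrangement n) (S : Set (Fin n)) : Prop :=
  ∃ x ∈ Set.Icc (0:ℝ) 1, ∃ y : ℝ, (∀ i, g.line i x ≠ y) ∧ S = {i : Fin n | y < g.line i x}

/-- The domain `D(g)`: all linear orders on `Fin n` all of whose prefix sets
(equivalently, all of whose upward closed sets) are chamber sets of `g`. -/
def domain {n : ℕ} (g : GenArrangement n) : Set (Fin n → Fin n → Prop) :=
  {r | IsLinOrder r ∧
    ∀ S : Set (Fin n), (∀ a ∈ S, ∀ b, r b a → b ∈ S) → g.IsChamberSet S}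

end GenArrangement

/-- `t` is the top element of the order `p`. -/
def IsTopOf {A : Type*} (p : A → A → Prop) (t : A) : Prop :=
  ∀ y, y ≠ t → p t y

/-- `p` is single-peaked with respect to the axis `ax`: whenever `a` lies strictly
between `b` and the top of `p` on the axis, `p` ranks `a` above `b`. -/
def SinglePeakedWRT {A : Type*} (ax p : A → A → Prop) : Prop :=
  ∀ t, IsTopOf p t → ∀ a b, ((ax b a ∧ ax a t) ∨ (ax t a ∧ ax a b)) → p a b

/-- The linear order determined by a list, ranking `a` above `b` iff `a` occurs
earlier in the list. -/
def ofList {A : Type*} [DecidableEq A] (l : List A) (a b : A) : Prop :=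
  l.idxOf a < l.idxOf b

/-- The domain `D_{4,2}` of eight linear orders on `{1,2,3,4}` (represented as
`Fin 4`, with alternative `i+1` encoded as `i`): 1234, 2134, 2314, 3214, 2341,
3241, 2431, 4231. -/
def D42 : Set (Fin 4 → Fin 4 → Prop) :=
  {ofList [0,1,2,3], ofList [1,0,2,3], ofList [1,2,0,3], ofList [2,1,0,3],
   ofList [1,2,3,0], ofList [2,1,3,0], ofList [1,3,2,0], ofList [3,1,2,0]}

/-- The domain `D_{3,1}` of four linear orders on `{1,2,3}` (represented as `Fin 3`,
with alternative `i+1` encoded as `i`): 123, 213, 231, 321. -/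
def D31 : Set (Fin 3 → Fin 3 → Prop) :=
  {ofList [0,1,2], ofList [1,0,2], ofList [1,2,0], ofList [2,1,0]}

/-!
If the levels of two crossings `x₁, x₂` of the pseudolines `i, j` differ, some third line `k` passes
above both at one crossing and below both at the other, so `k` crosses `i` at some `t` in between,
where `j` is either below or above. Reading off the order of the lines at generic points near the
three crossings yields three orders of `D(f)` forming a Latin square on `{i, j, k}`
(e.g. `k ≻ j ≻ i`, `j ≻ i ≻ k`, `i ≻ k ≻ j`), whose majority relation is cyclic.
-/

open Set Filter Topology Function

section Majority

variable {A : Type*}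

lemma majPrefers_comp_perm {m : ℕ} (P : Fin m → A → A → Prop) (σ : Equiv.Perm (Fin m)) :
    MajPrefers (P ∘ σ) = MajPrefers P := by
  ext a b
  simp only [MajPrefers]
  rw [Nat.card_congr (σ.subtypeEquiv fun _ => Iff.rfl : {v // (P ∘ σ) v a b} ≃ {v // P v a b}),
    Nat.card_congr (σ.subtypeEquiv fun _ => Iff.rfl : {v // (P ∘ σ) v b a} ≃ {v // P v b a})]

lemma majPrefers_of_two_of_three {p q r : A → A → Prop} {a b : A}
    (hp : p a b) (hq : q b a) (hr : r a b) (hp' : ¬ p b a) (hq' : ¬ q a b) (hr' : ¬ r b a) :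
    MajPrefers ![p, q, r] a b := by
  classical
  rw [MajPrefers, Nat.card_eq_fintype_card, Fintype.card_subtype, Finset.card_filter,
    Fin.sum_univ_three, Nat.card_eq_fintype_card, Fintype.card_subtype, Finset.card_filter,
    Fin.sum_univ_three]
  simp [*]

theorem not_isCondorcet_of_cyclic {D : Set (A → A → Prop)} {p q r : A → A → Prop}
    [IsStrictOrder A p] [IsStrictOrder A q] [IsStrictOrder A r]
    (hpD : p ∈ D) (hqD : q ∈ D) (hrD : r ∈ D) {a b c : A}
    (hpab : p a b) (hpbc : p b c) (hqbc : q b c) (hqca : q c a) (hrca : r c a) (hrab : r a b) :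
    ¬ IsCondorcet D := by
  intro hD
  have hqba : q b a := _root_.trans hqbc hqca
  have hrcb : r c b := _root_.trans hrca hrab
  have hpac : p a c := _root_.trans hpab hpbc
  have hrot : ∀ {s₁ s₂ s₃ : A → A → Prop}, ![s₁, s₂, s₃] ∘ finRotate 3 = ![s₂, s₃, s₁] := by
    intro s₁ s₂ s₃; funext v; fin_cases v <;> rfl
  have hab : MajPrefers ![p, q, r] a b :=
    majPrefers_of_two_of_three hpab hqba hrab (asymm hpab) (asymm hqba) (asymm hrab)
  have hbc : MajPrefers ![p, q, r] b c := by
    rw [← majPrefers_comp_perm _ (finRotate 3), hrot]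
    exact majPrefers_of_two_of_three hqbc hrcb hpbc (asymm hqbc) (asymm hrcb) (asymm hpbc)
  have hca : MajPrefers ![p, q, r] c a := by
    rw [← majPrefers_comp_perm _ (finRotate 3 * finRotate 3), Equiv.Perm.coe_mul,
      ← Function.comp_assoc, hrot, hrot]
    exact majPrefers_of_two_of_three hrca hpac hqca (asymm hrca) (asymm hpac) (asymm hqca)
  have hac := hD 3 ![p, q, r] ⟨1, rfl⟩ (fun v => by fin_cases v <;> assumption) hab hbc
  exact lt_asymm hac hca

end Majority

namespace GenArrangement

variable {n : ℕ} (g : GenArrangement n)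

def IsGeneric (x : ℝ) : Prop :=
  x ∈ Icc (0 : ℝ) 1 ∧ Injective (g.line · x)

def valueOrder (x : ℝ) (a b : Fin n) : Prop :=
  g.line b x < g.line a x

instance (x : ℝ) : IsStrictOrder (Fin n) (g.valueOrder x) where
  irrefl _ := lt_irrefl _
  trans _ _ _ hab hbc := hbc.trans hab

lemma valueOrder_mem_domain {x : ℝ} (hx : g.IsGeneric x) : g.valueOrder x ∈ g.domain := by
  refine ⟨{ trichotomous := fun a b hab hba => hx.2 (le_antisymm (not_lt.1 hab) (not_lt.1 hba)) },
    fun S hS => ?_⟩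
  have hsep : ∀ y ∈ (g.line · x) '' Sᶜ, ∀ z ∈ (g.line · x) '' S, y < z := by
    rintro _ ⟨b, hb, rfl⟩ _ ⟨a, ha, rfl⟩
    refine lt_of_le_of_ne (not_lt.1 fun hab => hb (hS a ha b hab)) fun hba => ?_
    exact hb (hx.2 hba ▸ ha)
  obtain ⟨y, hlow, hhigh⟩ := (Set.toFinite _).exists_between' (Set.toFinite _) hsep
  refine ⟨x, hx.1, y, fun a hay => ?_, ?_⟩
  · by_cases ha : a ∈ S
    · exact (hhigh _ ⟨a, ha, rfl⟩).ne' hay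
    · exact (hlow _ ⟨a, ha, rfl⟩).ne hay
  · ext a
    refine ⟨fun ha => hhigh _ ⟨a, ha, rfl⟩, fun hay => ?_⟩
    by_contra ha
    exact (hlow _ ⟨a, ha, rfl⟩).not_gt hay

lemma finite_setOf_not_injective :
    {x | x ∈ Ioo (0 : ℝ) 1 ∧ ¬ Injective (g.line · x)}.Finite := by
  refine (Set.finite_iUnion fun a : Fin n => Set.finite_iUnion fun b : Fin n =>
    Set.finite_iUnion fun hab : a ≠ b => g.inter_finite a b hab).subset ?_
  rintro x ⟨hx, hinj⟩
  obtain ⟨a, b, he, hab⟩ := not_injective_iff.1 hinj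
  exact mem_iUnion₂.2 ⟨a, b, mem_iUnion.2 ⟨hab, hx, he⟩⟩

lemma eventually_isGeneric {x : ℝ} (hx : x ∈ Ioo (0 : ℝ) 1) :
    ∀ᶠ y in 𝓝[≠] x, g.IsGeneric y := by
  have hmem : ∀ᶠ y in 𝓝[≠] x, y ∈ Ioo (0 : ℝ) 1 :=
    nhdsWithin_le_nhds (Ioo_mem_nhds hx.1 hx.2)
  have hnot : ∀ᶠ y in 𝓝[≠] x, y ∉ {x | x ∈ Ioo (0 : ℝ) 1 ∧ ¬ Injective (g.line · x)} :=
    nhdsNE_le_cofinite x g.finite_setOf_not_injective.eventually_cofinite_notMem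
  filter_upwards [hmem, hnot] with y hy hy'
  exact ⟨Ioo_subset_Icc_self hy, not_not.1 fun h => hy' ⟨hy, h⟩⟩

lemma eventually_line_lt {x : ℝ} (hx : x ∈ Ioo (0 : ℝ) 1) {a b : Fin n}
    (h : g.line a x < g.line b x) : ∀ᶠ y in 𝓝 x, g.line a y < g.line b y :=
  have hcont : ∀ c, ContinuousAt (g.line c) x :=
    fun c => (g.continuous c).continuousAt (Icc_mem_nhds hx.1 hx.2)
  (hcont a).eventually_lt (hcont b) h

lemma exists_isGeneric_lt_near_mem_Z {i j : Fin n} (hij : i ≠ j) {x : ℝ} (hx : x ∈ g.Z i j)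
    {P : ℝ → Prop} (hP : ∀ᶠ y in 𝓝 x, P y) :
    ∃ u, g.IsGeneric u ∧ P u ∧ g.line i u < g.line j u := by
  obtain ⟨ε, hε, -, hsign⟩ := g.sign_change i j hij x hx.1 hx.2
  have hgood : ∀ᶠ y in 𝓝[≠] x, g.IsGeneric y ∧ P y :=
    (g.eventually_isGeneric hx.1).and (nhdsWithin_le_nhds hP)
  obtain ⟨u, ⟨hu, hPu⟩, hux⟩ :=
    ((hgood.filter_mono (nhdsLT_le_nhdsNE x)).and (Ioo_mem_nhdsLT (sub_lt_self x hε))).exists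
  obtain ⟨v, ⟨hv, hPv⟩, hvx⟩ :=
    ((hgood.filter_mono (nhdsGT_le_nhdsNE x)).and
      (Ioo_mem_nhdsGT (lt_add_of_pos_right x hε))).exists
  rcases mul_neg_iff.1 (hsign u hux v hvx) with ⟨-, hv'⟩ | ⟨hu', -⟩
  · exact ⟨v, hv, hPv, sub_neg.1 hv'⟩
  · exact ⟨u, hu, hPu, sub_neg.1 hu'⟩

lemma exists_mem_Z_of_lt_of_gt {a b : Fin n} {x y : ℝ} (hx : x ∈ Ioo (0 : ℝ) 1)
    (hy : y ∈ Ioo (0 : ℝ) 1) (hxab : g.line a x < g.line b x) (hyab : g.line b y < g.line a y) :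
    ∃ t, t ∈ g.Z a b := by
  have hsub : uIcc x y ⊆ Ioo (0 : ℝ) 1 := ordConnected_Ioo.uIcc_subset hx hy
  have hcont : ContinuousOn (fun t => g.line a t - g.line b t) (uIcc x y) :=
    ((g.continuous a).sub (g.continuous b)).mono (hsub.trans Ioo_subset_Icc_self)
  obtain ⟨t, ht, hzero⟩ := intermediate_value_uIcc hcont
    (mem_uIcc.2 (Or.inl ⟨(sub_neg.2 hxab).le, (sub_pos.2 hyab).le⟩) : (0 : ℝ) ∈ _)
  exact ⟨t, hsub ht, sub_eq_zero.1 hzero⟩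

theorem not_isCondorcet_domain_of_lt_of_gt {i j k : Fin n} (hij : i ≠ j) (hki : k ≠ i)
    (hkj : k ≠ j) {x y : ℝ} (hx : x ∈ g.Z i j) (hy : y ∈ g.Z i j)
    (hxk : g.line i x < g.line k x) (hyk : g.line k y < g.line i y) :
    ¬ IsCondorcet g.domain := by
  obtain ⟨t, ht⟩ := g.exists_mem_Z_of_lt_of_gt hx.1 hy.1 hxk hyk
  have hjt : g.line j t ≠ g.line i t := fun h =>
    g.no_triple j i k hij.symm hki.symm hkj.symm t (Ioo_subset_Icc_self ht.1) ⟨h, ht.2⟩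
  rcases hjt.lt_or_gt with hjt | hjt
  · -- `i ≻ k ≻ j` near `t`, `k ≻ j ≻ i` near `x`, `j ≻ i ≻ k` near `y`
    obtain ⟨u, hu, hju, hku⟩ := g.exists_isGeneric_lt_near_mem_Z hki ⟨ht.1, ht.2.symm⟩
      (g.eventually_line_lt ht.1 (ht.2 ▸ hjt : g.line j t < g.line k t))
    obtain ⟨v, hv, hjv, hiv⟩ := g.exists_isGeneric_lt_near_mem_Z hij hx
      (g.eventually_line_lt hx.1 (hx.2 ▸ hxk : g.line j x < g.line k x))
    obtain ⟨w, hw, hkw, hiw⟩ := g.exists_isGeneric_lt_near_mem_Z hij hy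
      (g.eventually_line_lt hy.1 hyk)
    exact not_isCondorcet_of_cyclic (g.valueOrder_mem_domain hu) (g.valueOrder_mem_domain hv)
      (g.valueOrder_mem_domain hw) (b := k) hku hju hjv hiv hiw hkw
  · -- `j ≻ k ≻ i` near `t`, `i ≻ j ≻ k` near `y`, `k ≻ i ≻ j` near `x`
    obtain ⟨u, hu, hku, hiu⟩ := g.exists_isGeneric_lt_near_mem_Z hki.symm ⟨ht.1, ht.2⟩
      (g.eventually_line_lt ht.1 (ht.2 ▸ hjt : g.line k t < g.line j t))
    obtain ⟨v, hv, hkv, hjv⟩ := g.exists_isGeneric_lt_near_mem_Z hij.symm ⟨hy.1, hy.2.symm⟩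
      (g.eventually_line_lt hy.1 (hy.2 ▸ hyk : g.line k y < g.line j y))
    obtain ⟨w, hw, hiw, hjw⟩ := g.exists_isGeneric_lt_near_mem_Z hij.symm ⟨hx.1, hx.2.symm⟩
      (g.eventually_line_lt hx.1 hxk)
    exact not_isCondorcet_of_cyclic (g.valueOrder_mem_domain hv) (g.valueOrder_mem_domain hu)
      (g.valueOrder_mem_domain hw) (b := j) hjv hkv hku hiu hiw hjw

lemma exists_lt_iff_ne_of_level_ne {i j : Fin n} {x₁ x₂ : ℝ}
    (hlev : g.level i j x₁ ≠ g.level i j x₂) :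
    ∃ k, k ≠ i ∧ k ≠ j ∧ ¬ (g.line i x₁ < g.line k x₁ ↔ g.line i x₂ < g.line k x₂) := by
  contrapose! hlev
  exact Nat.card_congr (Equiv.subtypeEquivRight fun k =>
    and_congr_right fun hki => and_congr_right fun hkj => hlev k hki hkj)

end GenArrangement

/-- if two pseudolines of a generalised arrangement intersect twice
at different levels, then the associated domain is not Condorcet. -/
theorem not_condorcet_of_levels_differ (n : ℕ) (g : GenArrangement n)
    (i j : Fin n) (hij : i ≠ j) (x₁ x₂ : ℝ)
    (hx₁ : x₁ ∈ g.Z i j) (hx₂ : x₂ ∈ g.Z i j)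
    (hlev : g.level i j x₁ ≠ g.level i j x₂) :
    ¬ IsCondorcet g.domain := by
  obtain ⟨k, hki, hkj, hk⟩ := g.exists_lt_iff_ne_of_level_ne hlev
  have hne : ∀ x ∈ g.Z i j, g.line k x ≠ g.line i x := fun x hx h =>
    g.no_triple k i j hki hij hkj x (Ioo_subset_Icc_self hx.1) ⟨h, hx.2⟩
  by_cases h₁ : g.line i x₁ < g.line k x₁
  · have h₂ : g.line k x₂ < g.line i x₂ :=
      (not_lt.1 fun h₂ => hk (iff_of_true h₁ h₂)).lt_of_ne (hne x₂ hx₂)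
    exact g.not_isCondorcet_domain_of_lt_of_gt hij hki hkj hx₁ hx₂ h₁ h₂
  · have h₁' : g.line k x₁ < g.line i x₁ := (not_lt.1 h₁).lt_of_ne (hne x₁ hx₁)
    have h₂ : g.line i x₂ < g.line k x₂ := not_not.1 fun h₂ => hk (iff_of_false h₁ h₂)
    exact g.not_isCondorcet_domain_of_lt_of_gt hij hki hkj hx₂ hx₁ h₂ h₁'
end

section
/- The domain D_{4,2} is a Condorcet domain: for every profile consisting of an odd number of orders from D_{4,2}, the strict pairwise majority relation is transitive. -/
open Set

/-!
A domain of linear orders in which every triple `{a, b, c}` has a never-bottom alternative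
admits no majority cycle: if, say, `a` is never ranked last among the three, then every voter
ranking `b` above `c` also ranks `a` above `c`, and every voter ranking `c` above `a` also ranks
`c` above `b`; so `b ≻ c` and `c ≻ a` in the majority would give `a ≻ c` and `c ≻ b`. For an odd
number of voters the majority relation is total on distinct alternatives, so the absence of
cycles is transitivity. The domain `D_{4,2}` has a never-bottom alternative on every triple.
-/

section Majority

variable {A : Type*} {m : ℕ} {P : Fin m → A → A → Prop}

lemma card_subtype_le_of_imp {α : Type*} [Finite α] {Q R : α → Prop} (h : ∀ i, Q i → R i) :
    Nat.card {i // Q i} ≤ Nat.card {i // R i} :=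
  Nat.card_le_card_of_injective _ (Subtype.impEmbedding _ _ h).injective

lemma MajPrefers.ne {a b : A} (hab : MajPrefers P a b) : a ≠ b := by
  rintro rfl
  exact lt_irrefl _ hab

lemma MajPrefers.asymm {a b : A} (hab : MajPrefers P a b) : ¬ MajPrefers P b a :=
  lt_asymm hab

lemma card_prefers_add_card_prefers (hlin : ∀ i, IsLinOrder (P i)) {a b : A} (hab : a ≠ b) :
    Nat.card {i : Fin m // P i a b} + Nat.card {i : Fin m // P i b a} = m := by
  classical
  have hcompl : ∀ i, P i b a ↔ ¬ P i a b := fun i =>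
    ⟨fun hba hab' => (hlin i).irrefl a ((hlin i).trans _ _ _ hab' hba),
     fun hab' => by_contra fun hba => hab ((hlin i).trichotomous a b hab' hba)⟩
  have hle := Fintype.card_subtype_le fun i => P i a b
  rw [Nat.card_congr (Equiv.subtypeEquivRight hcompl), Nat.card_eq_fintype_card,
    Nat.card_eq_fintype_card, Fintype.card_subtype_compl]
  rw [Fintype.card_fin] at hle ⊢
  omega

lemma MajPrefers.of_not_of_odd (hlin : ∀ i, IsLinOrder (P i)) (hm : Odd m) {a b : A}
    (hab : a ≠ b) (hba : ¬ MajPrefers P b a) : MajPrefers P a b := by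
  have := card_prefers_add_card_prefers hlin hab
  unfold MajPrefers at hba ⊢
  obtain ⟨k, rfl⟩ := hm
  omega

lemma not_majPrefers_cycle_of_neverBottom (hlin : ∀ i, IsLinOrder (P i)) {a b c : A}
    (hbot : ∀ i, P i a b ∨ P i a c) (hbc : MajPrefers P b c) : ¬ MajPrefers P c a := by
  have hbc_ac : ∀ i, P i b c → P i a c := fun i h =>
    (hbot i).elim (fun hab => (hlin i).trans _ _ _ hab h) id
  have hca_cb : ∀ i, P i c a → P i c b := fun i h =>
    (hbot i).elim ((hlin i).trans _ _ _ h)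
      (fun hac => ((hlin i).irrefl c ((hlin i).trans _ _ _ h hac)).elim)
  have := card_subtype_le_of_imp hbc_ac
  have := card_subtype_le_of_imp hca_cb
  unfold MajPrefers at hbc ⊢
  omega

lemma NeverBottom.prefers_or [DecidableEq A] {D : Set (A → A → Prop)} {T : Finset A} {x y z : A}
    (hbot : NeverBottom D T x) (hT : T ⊆ {x, y, z}) {p : A → A → Prop} (hp : p ∈ D)
    (hlin : IsLinOrder p) : p x y ∨ p x z := by
  obtain ⟨w, hwT, hwx, hpwx⟩ : ∃ w ∈ T, w ≠ x ∧ ¬ p w x := by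
    simpa only [not_forall, exists_prop] using hbot p hp
  have hpxw : p x w := by
    by_contra hpxw
    exact hwx (hlin.trichotomous w x hpwx hpxw)
  rcases Finset.mem_insert.mp (hT hwT) with rfl | hw
  · exact (hwx rfl).elim
  rcases Finset.mem_insert.mp hw with rfl | hw
  · exact .inl hpxw
  · exact .inr (Finset.mem_singleton.mp hw ▸ hpxw)

theorem IsArrowSP.isCondorcet {D : Set (A → A → Prop)} (hlin : ∀ r ∈ D, IsLinOrder r)
    (hD : IsArrowSP D) : IsCondorcet D := by
  classical
  intro m P hm hP a b c hab hbc
  have hlinP : ∀ i, IsLinOrder (P i) := fun i => hlin _ (hP i)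
  obtain rfl | hac := eq_or_ne a c
  · exact (hab.asymm hbc).elim
  refine MajPrefers.of_not_of_odd hlinP hm hac fun hca => ?_
  obtain ⟨x, hx, hbot⟩ := hD {a, b, c}
    (Finset.card_eq_three.mpr ⟨a, b, c, hab.ne, hac, hbc.ne, rfl⟩)
  have prefers_or {y z : A} (hT : ({a, b, c} : Finset A) ⊆ {x, y, z}) (i : Fin m) :
      P i x y ∨ P i x z :=
    hbot.prefers_or hT (hP i) (hlinP i)
  simp only [Finset.mem_insert, Finset.mem_singleton] at hx
  rcases hx with rfl | rfl | rfl
  · exact not_majPrefers_cycle_of_neverBottom hlinP (prefers_or subset_rfl) hbc hca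
  · exact not_majPrefers_cycle_of_neverBottom hlinP
      (prefers_or (by intro w; simp only [Finset.mem_insert, Finset.mem_singleton]; tauto))
      hca hab
  · exact not_majPrefers_cycle_of_neverBottom hlinP
      (prefers_or (by intro w; simp only [Finset.mem_insert, Finset.mem_singleton]; tauto))
      hab hbc

end Majority

lemma isLinOrder_ofList {A : Type*} [DecidableEq A] {l : List A} (hl : ∀ a, a ∈ l) :
    IsLinOrder (ofList l) where
  irrefl a := lt_irrefl (l.idxOf a)
  trans _ _ _ := lt_trans
  trichotomous a b hab hba := (List.idxOf_inj (hl a)).mp (by unfold ofList at hab hba; omega)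

instance {A : Type*} [DecidableEq A] (l : List A) (a b : A) : Decidable (ofList l a b) :=
  inferInstanceAs (Decidable (_ < _))

lemma isLinOrder_of_mem_D42 : ∀ r ∈ D42, IsLinOrder r := by
  simp only [D42, Set.mem_insert_iff, Set.mem_singleton_iff, forall_eq_or_imp, forall_eq]
  refine ⟨?_, ?_, ?_, ?_, ?_, ?_, ?_, ?_⟩ <;> exact isLinOrder_ofList (by decide)

set_option synthInstance.maxSize 1024 in
lemma isArrowSP_D42 : IsArrowSP D42 := by
  simp only [IsArrowSP, NeverBottom, D42, Set.mem_insert_iff, Set.mem_singleton_iff,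
    forall_eq_or_imp, forall_eq]
  decide

/-- `D_{4,2}` is a Condorcet domain. -/
theorem D42_isCondorcet : IsCondorcet D42 :=
  isArrowSP_D42.isCondorcet isLinOrder_of_mem_D42
end

section
/- The domain D_{4,2} is a maximal Condorcet domain: it is a Condorcet domain, and for every linear order q on {1,2,3,4} with q ∉ D_{4,2}, the set D_{4,2} ∪ {q} is not a Condorcet domain. -/
open Set

set_option maxRecDepth 8000

instance inst_s6 {A : Type*} [DecidableEq A] (l : List A) (a b : A) : Decidable (ofList l a b) := by
  unfold ofList; infer_instance

/-- The 24 permutation lists of `Fin 4`. -/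
def perms24 : List (List (Fin 4)) :=
  [[0,1,2,3],[0,1,3,2],[0,2,1,3],[0,2,3,1],[0,3,1,2],[0,3,2,1],
   [1,0,2,3],[1,0,3,2],[1,2,0,3],[1,2,3,0],[1,3,0,2],[1,3,2,0],
   [2,0,1,3],[2,0,3,1],[2,1,0,3],[2,1,3,0],[2,3,0,1],[2,3,1,0],
   [3,0,1,2],[3,0,2,1],[3,1,0,2],[3,1,2,0],[3,2,0,1],[3,2,1,0]]

theorem key_bij : ∀ f : Fin 4 → Fin 4, Function.Injective f →
    ∃ l ∈ perms24, ∀ a b : Fin 4, (ofList l a b ↔ f b < f a) := by decide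

theorem classify (q : Fin 4 → Fin 4 → Prop) (h : IsLinOrder q) :
    ∃ l ∈ perms24, q = ofList l := by
  classical
  have htr : ∀ a b c, q a b → q b c → q a c := fun a b c => h.trans a b c
  have hirr : ∀ a, ¬ q a a := h.irrefl
  have htri : ∀ a b, q a b ∨ a = b ∨ q b a := fun a b => by
    by_cases h1 : q a b
    · exact Or.inl h1
    by_cases h2 : q b a
    · exact Or.inr (Or.inr h2)
    exact Or.inr (Or.inl (h.trichotomous a b h1 h2))
  set rk : Fin 4 → ℕ := fun a => (Finset.univ.filter (fun c => q a c)).card with hrk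
  have hmono : ∀ a b, q a b → rk b < rk a := by
    intro a b hab
    apply Finset.card_lt_card
    constructor
    · intro c hc
      simp only [Finset.mem_filter, Finset.mem_univ, true_and] at hc ⊢
      exact htr _ _ _ hab hc
    · intro hsub
      have hb : b ∈ Finset.univ.filter (fun c => q a c) := by simp [hab]
      have := hsub hb
      simp only [Finset.mem_filter, Finset.mem_univ, true_and] at this
      exact hirr b this
  have hiff : ∀ a b, q a b ↔ rk b < rk a := by
    intro a b
    refine ⟨hmono a b, fun hlt => ?_⟩
    rcases htri a b with h1 | h1 | h1
    · exact h1
    · subst h1; omega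
    · exact absurd (hmono b a h1) (by omega)
  have hbound : ∀ a, rk a < 4 := by
    intro a
    have hlt : (Finset.univ.filter (fun c => q a c)).card < (Finset.univ : Finset (Fin 4)).card := by
      apply Finset.card_lt_card
      constructor
      · exact Finset.filter_subset _ _
      · intro hsub
        have := hsub (Finset.mem_univ a)
        simp only [Finset.mem_filter] at this
        exact hirr a this.2
    simpa using hlt
  set f : Fin 4 → Fin 4 := fun a => ⟨rk a, hbound a⟩ with hf
  have hinj : Function.Injective f := by
    intro a b hab
    rcases htri a b with h1 | h1 | h1
    · have := hmono a b h1
      have heq : rk a = rk b := congrArg Fin.val hab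
      omega
    · exact h1
    · have := hmono b a h1
      have heq : rk a = rk b := congrArg Fin.val hab
      omega
  obtain ⟨l, hl, hspec⟩ := key_bij f hinj
  refine ⟨l, hl, ?_⟩
  funext a b
  apply propext
  rw [hiff a b, hspec a b]
  constructor <;> intro hh <;> exact hh

/-- The eight lists of `D42` indexed by `Fin 8`. -/
def Ls : Fin 8 → List (Fin 4) :=
  ![[0,1,2,3],[1,0,2,3],[1,2,0,3],[2,1,0,3],[1,2,3,0],[2,1,3,0],[1,3,2,0],[3,1,2,0]]

lemma code_of_mem {r : Fin 4 → Fin 4 → Prop} (h : r ∈ D42) :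
    ∃ k : Fin 8, r = ofList (Ls k) := by
  rcases h with h|h|h|h|h|h|h|h
  exacts [⟨0, h⟩, ⟨1, h⟩, ⟨2, h⟩, ⟨3, h⟩, ⟨4, h⟩, ⟨5, h⟩, ⟨6, h⟩, ⟨7, h⟩]

lemma memD42 (k : Fin 8) : ofList (Ls k) ∈ D42 := by
  fin_cases k
  · exact Or.inl rfl
  · exact Or.inr (Or.inl rfl)
  · exact Or.inr (Or.inr (Or.inl rfl))
  · exact Or.inr (Or.inr (Or.inr (Or.inl rfl)))
  · exact Or.inr (Or.inr (Or.inr (Or.inr (Or.inl rfl))))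
  · exact Or.inr (Or.inr (Or.inr (Or.inr (Or.inr (Or.inl rfl)))))
  · exact Or.inr (Or.inr (Or.inr (Or.inr (Or.inr (Or.inr (Or.inl rfl))))))
  · exact Or.inr (Or.inr (Or.inr (Or.inr (Or.inr (Or.inr (Or.inr rfl))))))

lemma count_partition {m : ℕ} (e : Fin m → Fin 8) (p : Fin 8 → Prop) [DecidablePred p] :
    Nat.card {i : Fin m // p (e i)} =
      ∑ k ∈ Finset.univ.filter p, (Finset.univ.filter (fun i => e i = k)).card := by
  rw [Nat.card_eq_fintype_card, Fintype.card_subtype]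
  rw [Finset.card_eq_sum_card_fiberwise (f := e) (t := Finset.univ.filter p)
    (fun x hx => by simpa using hx)]
  apply Finset.sum_congr rfl
  intro k hk
  simp only [Finset.mem_filter, Finset.mem_univ, true_and] at hk
  rw [Finset.filter_filter]
  congr 1
  apply Finset.filter_congr
  intro i _
  constructor
  · exact fun h => h.2
  · exact fun h => ⟨by rw [h]; exact hk, h⟩

lemma majPrefers_iff_card {m : ℕ} (L : Fin m → List (Fin 4)) (a b : Fin 4) :
    MajPrefers (fun i => ofList (L i)) a b ↔
      (Finset.univ.filter (fun i => ofList (L i) a b)).card >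
        (Finset.univ.filter (fun i => ofList (L i) b a)).card := by
  unfold MajPrefers
  rw [Nat.card_eq_fintype_card, Nat.card_eq_fintype_card,
    Fintype.card_subtype, Fintype.card_subtype]

/-- `D_{4,2}` is a maximal Condorcet domain: it is Condorcet and
adding any further linear order destroys the Condorcet property. -/
theorem D42_isMaximalCondorcet :
    IsCondorcet D42 ∧
      ∀ q : Fin 4 → Fin 4 → Prop, IsLinOrder q → q ∉ D42 →
        ¬ IsCondorcet (insert q D42) := by
  constructor
  · exact D42_isCondorcet
  · intro q hq hqD
    obtain ⟨l, hl, rfl⟩ := classify q hq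
    simp only [perms24, List.mem_cons, List.not_mem_nil, or_false] at hl
    rcases hl with rfl|rfl|rfl|rfl|rfl|rfl|rfl|rfl|rfl|rfl|rfl|rfl|rfl|rfl|rfl|rfl|rfl|rfl|rfl|rfl|rfl|rfl|rfl|rfl
    · -- [0, 1, 2, 3] in D42
      exact absurd (memD42 0) hqD
    · -- [0, 1, 3, 2] : cycle 0 3 2 with [1, 3, 2, 0], [1, 2, 0, 3]
      intro hC
      have ht := hC 3 (fun i => ofList ((![[0,1,3,2], [1,3,2,0], [1,2,0,3]] : Fin 3 → List (Fin 4)) i))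
        ⟨1, rfl⟩ (by
          intro i
          fin_cases i
          · exact Set.mem_insert _ _
          · exact Set.mem_insert_of_mem _ (memD42 6)
          · exact Set.mem_insert_of_mem _ (memD42 2))
      have h1 : MajPrefers (fun i => ofList ((![[0,1,3,2], [1,3,2,0], [1,2,0,3]] : Fin 3 → List (Fin 4)) i)) 0 3 := by
        rw [majPrefers_iff_card]; decide
      have h2 : MajPrefers (fun i => ofList ((![[0,1,3,2], [1,3,2,0], [1,2,0,3]] : Fin 3 → List (Fin 4)) i)) 3 2 := by
        rw [majPrefers_iff_card]; decide
      have h3 : MajPrefers (fun i => ofList ((![[0,1,3,2], [1,3,2,0], [1,2,0,3]] : Fin 3 → List (Fin 4)) i)) 2 0 := by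
        rw [majPrefers_iff_card]; decide
      have h4 := ht h1 h2
      exact absurd h3 (Nat.lt_asymm h4)
    · -- [0, 2, 1, 3] : cycle 0 2 1 with [2, 1, 0, 3], [1, 0, 2, 3]
      intro hC
      have ht := hC 3 (fun i => ofList ((![[0,2,1,3], [2,1,0,3], [1,0,2,3]] : Fin 3 → List (Fin 4)) i))
        ⟨1, rfl⟩ (by
          intro i
          fin_cases i
          · exact Set.mem_insert _ _
          · exact Set.mem_insert_of_mem _ (memD42 3)
          · exact Set.mem_insert_of_mem _ (memD42 1))
      have h1 : MajPrefers (fun i => ofList ((![[0,2,1,3], [2,1,0,3], [1,0,2,3]] : Fin 3 → List (Fin 4)) i)) 0 2 := by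
        rw [majPrefers_iff_card]; decide
      have h2 : MajPrefers (fun i => ofList ((![[0,2,1,3], [2,1,0,3], [1,0,2,3]] : Fin 3 → List (Fin 4)) i)) 2 1 := by
        rw [majPrefers_iff_card]; decide
      have h3 : MajPrefers (fun i => ofList ((![[0,2,1,3], [2,1,0,3], [1,0,2,3]] : Fin 3 → List (Fin 4)) i)) 1 0 := by
        rw [majPrefers_iff_card]; decide
      have h4 := ht h1 h2
      exact absurd h3 (Nat.lt_asymm h4)
    · -- [0, 2, 3, 1] : cycle 0 2 1 with [2, 1, 0, 3], [1, 0, 2, 3]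
      intro hC
      have ht := hC 3 (fun i => ofList ((![[0,2,3,1], [2,1,0,3], [1,0,2,3]] : Fin 3 → List (Fin 4)) i))
        ⟨1, rfl⟩ (by
          intro i
          fin_cases i
          · exact Set.mem_insert _ _
          · exact Set.mem_insert_of_mem _ (memD42 3)
          · exact Set.mem_insert_of_mem _ (memD42 1))
      have h1 : MajPrefers (fun i => ofList ((![[0,2,3,1], [2,1,0,3], [1,0,2,3]] : Fin 3 → List (Fin 4)) i)) 0 2 := by
        rw [majPrefers_iff_card]; decide
      have h2 : MajPrefers (fun i => ofList ((![[0,2,3,1], [2,1,0,3], [1,0,2,3]] : Fin 3 → List (Fin 4)) i)) 2 1 := by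
        rw [majPrefers_iff_card]; decide
      have h3 : MajPrefers (fun i => ofList ((![[0,2,3,1], [2,1,0,3], [1,0,2,3]] : Fin 3 → List (Fin 4)) i)) 1 0 := by
        rw [majPrefers_iff_card]; decide
      have h4 := ht h1 h2
      exact absurd h3 (Nat.lt_asymm h4)
    · -- [0, 3, 1, 2] : cycle 0 3 1 with [3, 1, 2, 0], [1, 0, 2, 3]
      intro hC
      have ht := hC 3 (fun i => ofList ((![[0,3,1,2], [3,1,2,0], [1,0,2,3]] : Fin 3 → List (Fin 4)) i))
        ⟨1, rfl⟩ (by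
          intro i
          fin_cases i
          · exact Set.mem_insert _ _
          · exact Set.mem_insert_of_mem _ (memD42 7)
          · exact Set.mem_insert_of_mem _ (memD42 1))
      have h1 : MajPrefers (fun i => ofList ((![[0,3,1,2], [3,1,2,0], [1,0,2,3]] : Fin 3 → List (Fin 4)) i)) 0 3 := by
        rw [majPrefers_iff_card]; decide
      have h2 : MajPrefers (fun i => ofList ((![[0,3,1,2], [3,1,2,0], [1,0,2,3]] : Fin 3 → List (Fin 4)) i)) 3 1 := by
        rw [majPrefers_iff_card]; decide
      have h3 : MajPrefers (fun i => ofList ((![[0,3,1,2], [3,1,2,0], [1,0,2,3]] : Fin 3 → List (Fin 4)) i)) 1 0 := by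
        rw [majPrefers_iff_card]; decide
      have h4 := ht h1 h2
      exact absurd h3 (Nat.lt_asymm h4)
    · -- [0, 3, 2, 1] : cycle 0 2 1 with [2, 1, 0, 3], [1, 0, 2, 3]
      intro hC
      have ht := hC 3 (fun i => ofList ((![[0,3,2,1], [2,1,0,3], [1,0,2,3]] : Fin 3 → List (Fin 4)) i))
        ⟨1, rfl⟩ (by
          intro i
          fin_cases i
          · exact Set.mem_insert _ _
          · exact Set.mem_insert_of_mem _ (memD42 3)
          · exact Set.mem_insert_of_mem _ (memD42 1))
      have h1 : MajPrefers (fun i => ofList ((![[0,3,2,1], [2,1,0,3], [1,0,2,3]] : Fin 3 → List (Fin 4)) i)) 0 2 := by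
        rw [majPrefers_iff_card]; decide
      have h2 : MajPrefers (fun i => ofList ((![[0,3,2,1], [2,1,0,3], [1,0,2,3]] : Fin 3 → List (Fin 4)) i)) 2 1 := by
        rw [majPrefers_iff_card]; decide
      have h3 : MajPrefers (fun i => ofList ((![[0,3,2,1], [2,1,0,3], [1,0,2,3]] : Fin 3 → List (Fin 4)) i)) 1 0 := by
        rw [majPrefers_iff_card]; decide
      have h4 := ht h1 h2
      exact absurd h3 (Nat.lt_asymm h4)
    · -- [1, 0, 2, 3] in D42
      exact absurd (memD42 1) hqD
    · -- [1, 0, 3, 2] : cycle 0 3 2 with [1, 3, 2, 0], [1, 2, 0, 3]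
      intro hC
      have ht := hC 3 (fun i => ofList ((![[1,0,3,2], [1,3,2,0], [1,2,0,3]] : Fin 3 → List (Fin 4)) i))
        ⟨1, rfl⟩ (by
          intro i
          fin_cases i
          · exact Set.mem_insert _ _
          · exact Set.mem_insert_of_mem _ (memD42 6)
          · exact Set.mem_insert_of_mem _ (memD42 2))
      have h1 : MajPrefers (fun i => ofList ((![[1,0,3,2], [1,3,2,0], [1,2,0,3]] : Fin 3 → List (Fin 4)) i)) 0 3 := by
        rw [majPrefers_iff_card]; decide
      have h2 : MajPrefers (fun i => ofList ((![[1,0,3,2], [1,3,2,0], [1,2,0,3]] : Fin 3 → List (Fin 4)) i)) 3 2 := by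
        rw [majPrefers_iff_card]; decide
      have h3 : MajPrefers (fun i => ofList ((![[1,0,3,2], [1,3,2,0], [1,2,0,3]] : Fin 3 → List (Fin 4)) i)) 2 0 := by
        rw [majPrefers_iff_card]; decide
      have h4 := ht h1 h2
      exact absurd h3 (Nat.lt_asymm h4)
    · -- [1, 2, 0, 3] in D42
      exact absurd (memD42 2) hqD
    · -- [1, 2, 3, 0] in D42
      exact absurd (memD42 4) hqD
    · -- [1, 3, 0, 2] : cycle 3 0 2 with [0, 1, 2, 3], [1, 2, 3, 0]
      intro hC
      have ht := hC 3 (fun i => ofList ((![[1,3,0,2], [0,1,2,3], [1,2,3,0]] : Fin 3 → List (Fin 4)) i))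
        ⟨1, rfl⟩ (by
          intro i
          fin_cases i
          · exact Set.mem_insert _ _
          · exact Set.mem_insert_of_mem _ (memD42 0)
          · exact Set.mem_insert_of_mem _ (memD42 4))
      have h1 : MajPrefers (fun i => ofList ((![[1,3,0,2], [0,1,2,3], [1,2,3,0]] : Fin 3 → List (Fin 4)) i)) 3 0 := by
        rw [majPrefers_iff_card]; decide
      have h2 : MajPrefers (fun i => ofList ((![[1,3,0,2], [0,1,2,3], [1,2,3,0]] : Fin 3 → List (Fin 4)) i)) 0 2 := by
        rw [majPrefers_iff_card]; decide
      have h3 : MajPrefers (fun i => ofList ((![[1,3,0,2], [0,1,2,3], [1,2,3,0]] : Fin 3 → List (Fin 4)) i)) 2 3 := by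
        rw [majPrefers_iff_card]; decide
      have h4 := ht h1 h2
      exact absurd h3 (Nat.lt_asymm h4)
    · -- [1, 3, 2, 0] in D42
      exact absurd (memD42 6) hqD
    · -- [2, 0, 1, 3] : cycle 2 0 1 with [0, 1, 2, 3], [1, 2, 0, 3]
      intro hC
      have ht := hC 3 (fun i => ofList ((![[2,0,1,3], [0,1,2,3], [1,2,0,3]] : Fin 3 → List (Fin 4)) i))
        ⟨1, rfl⟩ (by
          intro i
          fin_cases i
          · exact Set.mem_insert _ _
          · exact Set.mem_insert_of_mem _ (memD42 0)
          · exact Set.mem_insert_of_mem _ (memD42 2))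
      have h1 : MajPrefers (fun i => ofList ((![[2,0,1,3], [0,1,2,3], [1,2,0,3]] : Fin 3 → List (Fin 4)) i)) 2 0 := by
        rw [majPrefers_iff_card]; decide
      have h2 : MajPrefers (fun i => ofList ((![[2,0,1,3], [0,1,2,3], [1,2,0,3]] : Fin 3 → List (Fin 4)) i)) 0 1 := by
        rw [majPrefers_iff_card]; decide
      have h3 : MajPrefers (fun i => ofList ((![[2,0,1,3], [0,1,2,3], [1,2,0,3]] : Fin 3 → List (Fin 4)) i)) 1 2 := by
        rw [majPrefers_iff_card]; decide
      have h4 := ht h1 h2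
      exact absurd h3 (Nat.lt_asymm h4)
    · -- [2, 0, 3, 1] : cycle 2 0 1 with [0, 1, 2, 3], [1, 2, 0, 3]
      intro hC
      have ht := hC 3 (fun i => ofList ((![[2,0,3,1], [0,1,2,3], [1,2,0,3]] : Fin 3 → List (Fin 4)) i))
        ⟨1, rfl⟩ (by
          intro i
          fin_cases i
          · exact Set.mem_insert _ _
          · exact Set.mem_insert_of_mem _ (memD42 0)
          · exact Set.mem_insert_of_mem _ (memD42 2))
      have h1 : MajPrefers (fun i => ofList ((![[2,0,3,1], [0,1,2,3], [1,2,0,3]] : Fin 3 → List (Fin 4)) i)) 2 0 := by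
        rw [majPrefers_iff_card]; decide
      have h2 : MajPrefers (fun i => ofList ((![[2,0,3,1], [0,1,2,3], [1,2,0,3]] : Fin 3 → List (Fin 4)) i)) 0 1 := by
        rw [majPrefers_iff_card]; decide
      have h3 : MajPrefers (fun i => ofList ((![[2,0,3,1], [0,1,2,3], [1,2,0,3]] : Fin 3 → List (Fin 4)) i)) 1 2 := by
        rw [majPrefers_iff_card]; decide
      have h4 := ht h1 h2
      exact absurd h3 (Nat.lt_asymm h4)
    · -- [2, 1, 0, 3] in D42
      exact absurd (memD42 3) hqD
    · -- [2, 1, 3, 0] in D42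
      exact absurd (memD42 5) hqD
    · -- [2, 3, 0, 1] : cycle 2 0 1 with [0, 1, 2, 3], [1, 2, 0, 3]
      intro hC
      have ht := hC 3 (fun i => ofList ((![[2,3,0,1], [0,1,2,3], [1,2,0,3]] : Fin 3 → List (Fin 4)) i))
        ⟨1, rfl⟩ (by
          intro i
          fin_cases i
          · exact Set.mem_insert _ _
          · exact Set.mem_insert_of_mem _ (memD42 0)
          · exact Set.mem_insert_of_mem _ (memD42 2))
      have h1 : MajPrefers (fun i => ofList ((![[2,3,0,1], [0,1,2,3], [1,2,0,3]] : Fin 3 → List (Fin 4)) i)) 2 0 := by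
        rw [majPrefers_iff_card]; decide
      have h2 : MajPrefers (fun i => ofList ((![[2,3,0,1], [0,1,2,3], [1,2,0,3]] : Fin 3 → List (Fin 4)) i)) 0 1 := by
        rw [majPrefers_iff_card]; decide
      have h3 : MajPrefers (fun i => ofList ((![[2,3,0,1], [0,1,2,3], [1,2,0,3]] : Fin 3 → List (Fin 4)) i)) 1 2 := by
        rw [majPrefers_iff_card]; decide
      have h4 := ht h1 h2
      exact absurd h3 (Nat.lt_asymm h4)
    · -- [2, 3, 1, 0] : cycle 2 3 1 with [3, 1, 2, 0], [0, 1, 2, 3]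
      intro hC
      have ht := hC 3 (fun i => ofList ((![[2,3,1,0], [3,1,2,0], [0,1,2,3]] : Fin 3 → List (Fin 4)) i))
        ⟨1, rfl⟩ (by
          intro i
          fin_cases i
          · exact Set.mem_insert _ _
          · exact Set.mem_insert_of_mem _ (memD42 7)
          · exact Set.mem_insert_of_mem _ (memD42 0))
      have h1 : MajPrefers (fun i => ofList ((![[2,3,1,0], [3,1,2,0], [0,1,2,3]] : Fin 3 → List (Fin 4)) i)) 2 3 := by
        rw [majPrefers_iff_card]; decide
      have h2 : MajPrefers (fun i => ofList ((![[2,3,1,0], [3,1,2,0], [0,1,2,3]] : Fin 3 → List (Fin 4)) i)) 3 1 := by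
        rw [majPrefers_iff_card]; decide
      have h3 : MajPrefers (fun i => ofList ((![[2,3,1,0], [3,1,2,0], [0,1,2,3]] : Fin 3 → List (Fin 4)) i)) 1 2 := by
        rw [majPrefers_iff_card]; decide
      have h4 := ht h1 h2
      exact absurd h3 (Nat.lt_asymm h4)
    · -- [3, 0, 1, 2] : cycle 3 0 1 with [0, 1, 2, 3], [1, 2, 3, 0]
      intro hC
      have ht := hC 3 (fun i => ofList ((![[3,0,1,2], [0,1,2,3], [1,2,3,0]] : Fin 3 → List (Fin 4)) i))
        ⟨1, rfl⟩ (by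
          intro i
          fin_cases i
          · exact Set.mem_insert _ _
          · exact Set.mem_insert_of_mem _ (memD42 0)
          · exact Set.mem_insert_of_mem _ (memD42 4))
      have h1 : MajPrefers (fun i => ofList ((![[3,0,1,2], [0,1,2,3], [1,2,3,0]] : Fin 3 → List (Fin 4)) i)) 3 0 := by
        rw [majPrefers_iff_card]; decide
      have h2 : MajPrefers (fun i => ofList ((![[3,0,1,2], [0,1,2,3], [1,2,3,0]] : Fin 3 → List (Fin 4)) i)) 0 1 := by
        rw [majPrefers_iff_card]; decide
      have h3 : MajPrefers (fun i => ofList ((![[3,0,1,2], [0,1,2,3], [1,2,3,0]] : Fin 3 → List (Fin 4)) i)) 1 3 := by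
        rw [majPrefers_iff_card]; decide
      have h4 := ht h1 h2
      exact absurd h3 (Nat.lt_asymm h4)
    · -- [3, 0, 2, 1] : cycle 0 2 1 with [2, 1, 0, 3], [1, 0, 2, 3]
      intro hC
      have ht := hC 3 (fun i => ofList ((![[3,0,2,1], [2,1,0,3], [1,0,2,3]] : Fin 3 → List (Fin 4)) i))
        ⟨1, rfl⟩ (by
          intro i
          fin_cases i
          · exact Set.mem_insert _ _
          · exact Set.mem_insert_of_mem _ (memD42 3)
          · exact Set.mem_insert_of_mem _ (memD42 1))
      have h1 : MajPrefers (fun i => ofList ((![[3,0,2,1], [2,1,0,3], [1,0,2,3]] : Fin 3 → List (Fin 4)) i)) 0 2 := by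
        rw [majPrefers_iff_card]; decide
      have h2 : MajPrefers (fun i => ofList ((![[3,0,2,1], [2,1,0,3], [1,0,2,3]] : Fin 3 → List (Fin 4)) i)) 2 1 := by
        rw [majPrefers_iff_card]; decide
      have h3 : MajPrefers (fun i => ofList ((![[3,0,2,1], [2,1,0,3], [1,0,2,3]] : Fin 3 → List (Fin 4)) i)) 1 0 := by
        rw [majPrefers_iff_card]; decide
      have h4 := ht h1 h2
      exact absurd h3 (Nat.lt_asymm h4)
    · -- [3, 1, 0, 2] : cycle 3 0 2 with [0, 1, 2, 3], [1, 2, 3, 0]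
      intro hC
      have ht := hC 3 (fun i => ofList ((![[3,1,0,2], [0,1,2,3], [1,2,3,0]] : Fin 3 → List (Fin 4)) i))
        ⟨1, rfl⟩ (by
          intro i
          fin_cases i
          · exact Set.mem_insert _ _
          · exact Set.mem_insert_of_mem _ (memD42 0)
          · exact Set.mem_insert_of_mem _ (memD42 4))
      have h1 : MajPrefers (fun i => ofList ((![[3,1,0,2], [0,1,2,3], [1,2,3,0]] : Fin 3 → List (Fin 4)) i)) 3 0 := by
        rw [majPrefers_iff_card]; decide
      have h2 : MajPrefers (fun i => ofList ((![[3,1,0,2], [0,1,2,3], [1,2,3,0]] : Fin 3 → List (Fin 4)) i)) 0 2 := by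
        rw [majPrefers_iff_card]; decide
      have h3 : MajPrefers (fun i => ofList ((![[3,1,0,2], [0,1,2,3], [1,2,3,0]] : Fin 3 → List (Fin 4)) i)) 2 3 := by
        rw [majPrefers_iff_card]; decide
      have h4 := ht h1 h2
      exact absurd h3 (Nat.lt_asymm h4)
    · -- [3, 1, 2, 0] in D42
      exact absurd (memD42 7) hqD
    · -- [3, 2, 0, 1] : cycle 2 0 1 with [0, 1, 2, 3], [1, 2, 0, 3]
      intro hC
      have ht := hC 3 (fun i => ofList ((![[3,2,0,1], [0,1,2,3], [1,2,0,3]] : Fin 3 → List (Fin 4)) i))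
        ⟨1, rfl⟩ (by
          intro i
          fin_cases i
          · exact Set.mem_insert _ _
          · exact Set.mem_insert_of_mem _ (memD42 0)
          · exact Set.mem_insert_of_mem _ (memD42 2))
      have h1 : MajPrefers (fun i => ofList ((![[3,2,0,1], [0,1,2,3], [1,2,0,3]] : Fin 3 → List (Fin 4)) i)) 2 0 := by
        rw [majPrefers_iff_card]; decide
      have h2 : MajPrefers (fun i => ofList ((![[3,2,0,1], [0,1,2,3], [1,2,0,3]] : Fin 3 → List (Fin 4)) i)) 0 1 := by
        rw [majPrefers_iff_card]; decide
      have h3 : MajPrefers (fun i => ofList ((![[3,2,0,1], [0,1,2,3], [1,2,0,3]] : Fin 3 → List (Fin 4)) i)) 1 2 := by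
        rw [majPrefers_iff_card]; decide
      have h4 := ht h1 h2
      exact absurd h3 (Nat.lt_asymm h4)
    · -- [3, 2, 1, 0] : cycle 3 2 1 with [2, 1, 0, 3], [1, 3, 2, 0]
      intro hC
      have ht := hC 3 (fun i => ofList ((![[3,2,1,0], [2,1,0,3], [1,3,2,0]] : Fin 3 → List (Fin 4)) i))
        ⟨1, rfl⟩ (by
          intro i
          fin_cases i
          · exact Set.mem_insert _ _
          · exact Set.mem_insert_of_mem _ (memD42 3)
          · exact Set.mem_insert_of_mem _ (memD42 6))
      have h1 : MajPrefers (fun i => ofList ((![[3,2,1,0], [2,1,0,3], [1,3,2,0]] : Fin 3 → List (Fin 4)) i)) 3 2 := by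
        rw [majPrefers_iff_card]; decide
      have h2 : MajPrefers (fun i => ofList ((![[3,2,1,0], [2,1,0,3], [1,3,2,0]] : Fin 3 → List (Fin 4)) i)) 2 1 := by
        rw [majPrefers_iff_card]; decide
      have h3 : MajPrefers (fun i => ofList ((![[3,2,1,0], [2,1,0,3], [1,3,2,0]] : Fin 3 → List (Fin 4)) i)) 1 3 := by
        rw [majPrefers_iff_card]; decide
      have h4 := ht h1 h2
      exact absurd h3 (Nat.lt_asymm h4)
end

section
/- The domain D_{4,2} is not single-peaked: there is no linear order (axis) ◁ on {1,2,3,4} such that every order in D_{4,2} is single-peaked with respect to ◁. -/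
open Set

/-! The bottom of a single-peaked order is an endpoint of its axis, since single-peakedness ranks
it above its axis neighbour on the side away from the peak. The bottoms 4 of 1234 and 1 of 2431
therefore force the axis to be 1 ? ? 4 up to reversal. If it is 1 3 2 4, then 3 lies between the
peak 1 of 1234 and 2, yet 1234 ranks 2 above 3; if it is 1 2 3 4, then 3 lies between the peak 2
of 2431 and 4, yet 2431 ranks 4 above 3. -/

open Function

variable {A : Type*}

def StrictlyBetween (ax : A → A → Prop) (a b c : A) : Prop :=
  (ax a b ∧ ax b c) ∨ (ax c b ∧ ax b a)

theorem strictlyBetween_swap {ax : A → A → Prop} {a b c : A} :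
    StrictlyBetween (swap ax) a b c ↔ StrictlyBetween ax a b c := by
  simp only [StrictlyBetween, swap, and_comm, or_comm]

def IsEndpoint (ax : A → A → Prop) (a : A) : Prop :=
  ∀ x y, ¬ StrictlyBetween ax x a y

theorem isEndpoint_swap {ax : A → A → Prop} {a : A} :
    IsEndpoint (swap ax) a ↔ IsEndpoint ax a := by
  simp only [IsEndpoint, strictlyBetween_swap]

theorem IsEndpoint.strictlyBetween_or {ax : A → A → Prop} [IsStrictTotalOrder A ax]
    {a b c d : A} (ha : IsEndpoint ax a) (hd : IsEndpoint ax d) (hac : a ≠ c) (had : a ≠ d)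
    (hbc : b ≠ c) (hcd : c ≠ d) : StrictlyBetween ax b c a ∨ StrictlyBetween ax d c b := by
  wlog hac' : ax a c generalizing ax
  · have := this (ax := swap ax) (isEndpoint_swap.mpr ha) (isEndpoint_swap.mpr hd)
      (((trichotomous_of ax a c).resolve_left hac').resolve_left hac)
    simpa only [strictlyBetween_swap] using this
  have rel_of_ne : ∀ {x y}, x ≠ y → ¬ ax y x → ax x y := fun hne hyx =>
    (trichotomous_of ax _ _).resolve_right (not_or_intro hne hyx)
  have had' : ax a d := rel_of_ne had fun hda => ha d c (Or.inl ⟨hda, hac'⟩)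
  have hcd' : ax c d := rel_of_ne hcd fun hdc => hd a c (Or.inl ⟨had', hdc⟩)
  rcases trichotomous_of ax b c with hbc' | rfl | hcb'
  · exact Or.inr (Or.inr ⟨hbc', hcd'⟩)
  · exact absurd rfl hbc
  · exact Or.inl (Or.inr ⟨hac', hcb'⟩)

def IsBottomOf (p : A → A → Prop) (b : A) : Prop :=
  ∀ y, y ≠ b → p y b

instance [DecidableEq A] (l : List A) : Std.Asymm (ofList l) :=
  ⟨fun _ _ => lt_asymm⟩

section SinglePeaked

variable {ax p : A → A → Prop} {t : A}

theorem SinglePeakedWRT.rank_of_strictlyBetween (h : SinglePeakedWRT ax p) (ht : IsTopOf p t)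
    {a b : A} (hab : StrictlyBetween ax b a t) : p a b :=
  h t ht a b hab

theorem SinglePeakedWRT.isEndpoint_of_isBottomOf [IsStrictTotalOrder A ax] [Std.Asymm p]
    (h : SinglePeakedWRT ax p) (ht : IsTopOf p t) {b : A} (hb : IsBottomOf p b) :
    IsEndpoint ax b := by
  intro x y hxby
  obtain ⟨u, hub⟩ : ∃ u, ax u b := by rcases hxby with ⟨h, -⟩ | ⟨h, -⟩ <;> exact ⟨_, h⟩
  obtain ⟨v, hbv⟩ : ∃ v, ax b v := by rcases hxby with ⟨-, h⟩ | ⟨-, h⟩ <;> exact ⟨_, h⟩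
  have hu : u ≠ b := ne_of_irrefl hub
  have hv : v ≠ b := (ne_of_irrefl hbv).symm
  rcases trichotomous_of ax t b with htb | rfl | hbt
  · exact asymm (h.rank_of_strictlyBetween ht (Or.inr ⟨htb, hbv⟩)) (hb v hv)
  · exact asymm (ht u hu) (hb u hu)
  · exact asymm (h.rank_of_strictlyBetween ht (Or.inl ⟨hub, hbt⟩)) (hb u hu)

end SinglePeaked

/-- `D_{4,2}` is not single-peaked: there is no axis (linear order)
with respect to which all orders of `D_{4,2}` are single-peaked. -/
theorem D42_not_singlePeaked :
    ¬ ∃ ax : Fin 4 → Fin 4 → Prop, IsLinOrder ax ∧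
        ∀ p ∈ D42, SinglePeakedWRT ax p := by
  rintro ⟨ax, hlin, hsp⟩
  have : IsStrictTotalOrder (Fin 4) ax := hlin
  have h1234 := hsp (ofList [0, 1, 2, 3]) (by simp [D42])
  have h2431 := hsp (ofList [1, 3, 2, 0]) (by simp [D42])
  have top1234 : IsTopOf (ofList [0, 1, 2, 3]) (0 : Fin 4) := by
    unfold IsTopOf ofList; decide
  have top2431 : IsTopOf (ofList [1, 3, 2, 0]) (1 : Fin 4) := by
    unfold IsTopOf ofList; decide
  have end1 := h2431.isEndpoint_of_isBottomOf top2431 (b := 0)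
    (by unfold IsBottomOf ofList; decide)
  have end4 := h1234.isEndpoint_of_isBottomOf top1234 (b := 3)
    (by unfold IsBottomOf ofList; decide)
  rcases end1.strictlyBetween_or (b := 1) (c := 2) end4 (by decide) (by decide) (by decide)
      (by decide) with h | h
  · exact absurd (h1234.rank_of_strictlyBetween top1234 h) (by unfold ofList; decide)
  · exact absurd (h2431.rank_of_strictlyBetween top2431 h) (by unfold ofList; decide)
end

section
/- Every maximal Condorcet domain D on a finite set A with at least two elements that is Arrow's single-peaked contains two extremal orders: there exist distinct alternatives a, b ∈ A and orders p, q ∈ D such that p ranks a first and b last, and q ranks b first and a last. -/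
open Set

/-! ### Auxiliary machinery for Statement 15 -/

namespace ASPaux

variable {A : Type*}

lemma lin_total {r : A → A → Prop} (h : IsLinOrder r) {x y : A} (hxy : x ≠ y) :
    r x y ∨ r y x := by
  by_contra hc
  push_neg at hc
  exact hxy (h.trichotomous x y hc.1 hc.2)

lemma lin_trans {r : A → A → Prop} (h : IsLinOrder r) {x y z : A}
    (h1 : r x y) (h2 : r y z) : r x z := h.trans x y z h1 h2

lemma lin_irrefl {r : A → A → Prop} (h : IsLinOrder r) (x : A) : ¬ r x x := h.irrefl x

lemma lin_asymm {r : A → A → Prop} (h : IsLinOrder r) {x y : A} (h1 : r x y) : ¬ r y x :=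
  fun h2 => lin_irrefl h x (lin_trans h h1 h2)

lemma rel_min [Finite A] {s : A → A → Prop}
    (ht : ∀ {x y z}, s x y → s y z → s x z) (hi : ∀ x, ¬ s x x)
    (S : Set A) (hS : S.Nonempty) : ∃ m ∈ S, ∀ x ∈ S, ¬ s x m := by
  have i1 : IsTrans A s := ⟨fun _ _ _ a b => ht a b⟩
  have i2 : IsIrrefl A s := ⟨hi⟩
  exact (@Finite.wellFounded_of_trans_of_irrefl A _ s i1 i2).has_min S hS

/-- `b` is the bottom (last-ranked) element of `r`. -/
def IsBotOf (r : A → A → Prop) (b : A) : Prop := ∀ y, y ≠ b → r y b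

lemma exists_bot [Finite A] [Nonempty A] {r : A → A → Prop} (h : IsLinOrder r) :
    ∃ b, IsBotOf r b := by
  obtain ⟨m, -, hm⟩ := rel_min (s := fun p q => r q p)
    (fun h1 h2 => lin_trans h h2 h1) (fun x => lin_irrefl h x) Set.univ
    ⟨Classical.arbitrary A, trivial⟩
  exact ⟨m, fun y hy => (lin_total h hy).resolve_right (hm y trivial)⟩

lemma exists_pair [DecidableEq A] {T : Finset A} (hT : T.card = 3) {a : A} (ha : a ∈ T) :
    ∃ p q, p ≠ a ∧ q ≠ a ∧ p ≠ q ∧ T = {a, p, q} := by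
  obtain ⟨u, v, w, huv, huw, hvw, rfl⟩ := Finset.card_eq_three.mp hT
  simp only [Finset.mem_insert, Finset.mem_singleton] at ha
  rcases ha with rfl | rfl | rfl
  · exact ⟨v, w, Ne.symm huv, Ne.symm huw, hvw, rfl⟩
  · exact ⟨u, w, huv, Ne.symm hvw, huw, by ext s; simp; tauto⟩
  · exact ⟨u, v, huw, hvw, huv, by ext s; simp; tauto⟩

lemma exists_third [DecidableEq A] {T : Finset A} (hT : T.card = 3) {x y : A}
    (hx : x ∈ T) (hy : y ∈ T) (hxy : x ≠ y) : ∃ t, t ≠ x ∧ t ≠ y ∧ T = {x, y, t} := by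
  obtain ⟨u, v, w, huv, huw, hvw, rfl⟩ := Finset.card_eq_three.mp hT
  simp only [Finset.mem_insert, Finset.mem_singleton] at hx hy
  rcases hx with rfl | rfl | rfl <;> rcases hy with rfl | rfl | rfl
  · exact absurd rfl hxy
  · exact ⟨w, Ne.symm huw, Ne.symm hvw, rfl⟩
  · exact ⟨v, Ne.symm huv, hvw, by ext s; simp; tauto⟩
  · exact ⟨w, Ne.symm hvw, Ne.symm huw, by ext s; simp; tauto⟩
  · exact absurd rfl hxy
  · exact ⟨u, huv, huw, by ext s; simp; tauto⟩
  · exact ⟨v, hvw, Ne.symm huv, by ext s; simp; tauto⟩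
  · exact ⟨u, huw, huv, by ext s; simp; tauto⟩
  · exact absurd rfl hxy

lemma tricard [DecidableEq A] {a x y : A} (hx : x ≠ a) (hy : y ≠ a) (hxy : x ≠ y) :
    ({a, x, y} : Finset A).card = 3 :=
  Finset.card_eq_three.mpr ⟨a, x, y, Ne.symm hx, Ne.symm hy, hxy, rfl⟩

/-- Sen's value-restriction theorem (sufficiency). -/
theorem sen_condorcet (D : Set (A → A → Prop)) (hlin : ∀ r ∈ D, IsLinOrder r)
    (hvr : ∀ T : Finset A, T.card = 3 → ∃ x ∈ T,
      NeverTop D T x ∨ NeverMiddle D T x ∨ NeverBottom D T x) : IsCondorcet D := by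
  classical
  intro m P hodd hP
  have hlinP : ∀ i, IsLinOrder (P i) := fun i => hlin _ (hP i)
  set N : A → A → ℕ := fun x y => (Finset.univ.filter (fun i => P i x y)).card with hN
  have cardEq : ∀ x y : A, Nat.card {i // P i x y} = N x y := by
    intro x y
    rw [Nat.card_eq_fintype_card, Fintype.card_subtype]
  have hmaj : ∀ x y : A, MajPrefers P x y ↔ N x y > N y x := by
    intro x y
    unfold MajPrefers
    rw [cardEq, cardEq]
  have hsum : ∀ x y : A, x ≠ y → N x y + N y x = m := by
    intro x y hxy
    have h1 : Finset.univ.filter (fun i => P i y x)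
        = Finset.univ.filter (fun i => ¬ P i x y) := by
      apply Finset.filter_congr
      intro i _
      constructor
      · exact fun h => lin_asymm (hlinP i) h
      · exact fun h => (lin_total (hlinP i) hxy).resolve_left h
    have h2 := Finset.card_filter_add_card_filter_not
      (s := (Finset.univ : Finset (Fin m))) (p := fun i => P i x y)
    simp only [Finset.card_univ, Fintype.card_fin] at h2
    simp only [hN]
    rw [h1]
    exact h2
  have hne : ∀ {x y : A}, MajPrefers P x y → x ≠ y := by
    intro x y h
    rintro rfl
    rw [hmaj] at h
    exact lt_irrefl _ h
  have overlap : ∀ x y z : A, MajPrefers P x y → MajPrefers P y z →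
      ∃ i, P i x y ∧ P i y z := by
    intro x y z h1 h2
    have hxy := hne h1
    have hyz := hne h2
    rw [hmaj] at h1 h2
    have e1 := hsum x y hxy
    have e2 := hsum y z hyz
    have hu : ((Finset.univ.filter (fun i => P i x y)) ∪
        (Finset.univ.filter (fun i => P i y z))).card ≤ m := by
      refine le_trans (Finset.card_le_univ _) ?_
      simp
    have hc := Finset.card_union_add_card_inter
      (Finset.univ.filter (fun i => P i x y)) (Finset.univ.filter (fun i => P i y z))
    have hint : 0 < ((Finset.univ.filter (fun i => P i x y)) ∩
        (Finset.univ.filter (fun i => P i y z))).card := by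
      simp only [hN] at h1 h2 e1 e2
      omega
    obtain ⟨i, hi⟩ := Finset.card_pos.mp hint
    simp only [Finset.mem_inter, Finset.mem_filter, Finset.mem_univ, true_and] at hi
    exact ⟨i, hi.1, hi.2⟩
  intro a b c hab hbc
  by_contra hnac
  have hab' : a ≠ b := hne hab
  have hbc' : b ≠ c := hne hbc
  have hac : a ≠ c := by
    rintro rfl
    rw [hmaj] at hab hbc
    omega
  have hca : MajPrefers P c a := by
    rw [hmaj] at hnac ⊢
    have := hsum a c hac
    obtain ⟨k, hk⟩ := hodd
    omega
  set T : Finset A := {a, b, c} with hTdef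
  have hT3 : T.card = 3 := Finset.card_eq_three.mpr ⟨a, b, c, hab', hac, hbc', rfl⟩
  have hTm : ∀ y ∈ T, y = a ∨ y = b ∨ y = c := by
    intro y hy
    simpa [hTdef] using hy
  have core : ∀ u v w : A, v ∈ T → w ∈ T → (∀ y ∈ T, y = u ∨ y = v ∨ y = w) →
      u ≠ v → u ≠ w →
      MajPrefers P u v → MajPrefers P v w → MajPrefers P w u →
      (NeverTop D T u ∨ NeverMiddle D T u ∨ NeverBottom D T u) → False := by
    intro u v w hvT hwT hmem huv huw M1 M2 M3 hcond
    rcases hcond with hc | hc | hc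
    · obtain ⟨i, h1, h2⟩ := overlap u v w M1 M2
      refine hc (P i) (hP i) ?_
      intro y hy hyu
      rcases hmem y hy with rfl | rfl | rfl
      · exact absurd rfl hyu
      · exact h1
      · exact lin_trans (hlinP i) h1 h2
    · obtain ⟨i, h1, h2⟩ := overlap w u v M3 M1
      exact hc (P i) (hP i) ⟨w, hwT, v, hvT, Ne.symm huw, Ne.symm huv, h1, h2⟩
    · obtain ⟨i, h1, h2⟩ := overlap v w u M2 M3
      refine hc (P i) (hP i) ?_
      intro y hy hyu
      rcases hmem y hy with rfl | rfl | rfl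
      · exact absurd rfl hyu
      · exact lin_trans (hlinP i) h1 h2
      · exact h2
  obtain ⟨x, hxT, hcond⟩ := hvr T hT3
  have hbT : b ∈ T := by simp [hTdef]
  have hcT : c ∈ T := by simp [hTdef]
  have haT : a ∈ T := by simp [hTdef]
  rcases hTm x hxT with rfl | rfl | rfl
  · exact core x b c hbT hcT hTm hab' hac hab hbc hca hcond
  · exact core x c a hcT haT (fun y hy => by rcases hTm y hy with h | h | h <;> tauto)
      hbc' (Ne.symm hab') hbc hca hab hcond
  · exact core x a b haT hbT (fun y hy => by rcases hTm y hy with h | h | h <;> tauto)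
      (Ne.symm hac) (Ne.symm hbc') hca hab hbc hcond

/-- Saturation: a maximal Condorcet domain contains every linear order whose
addition keeps the domain value-restricted. -/
lemma mem_of_compat {D : Set (A → A → Prop)} (hD : ∀ r ∈ D, IsLinOrder r)
    (hmax : IsMaximalCondorcet D) {sg : A → A → Prop} (hsg : IsLinOrder sg)
    (hvr : ∀ T : Finset A, T.card = 3 → ∃ x ∈ T,
      NeverTop (insert sg D) T x ∨ NeverMiddle (insert sg D) T x ∨
        NeverBottom (insert sg D) T x) :
    sg ∈ D := by
  by_contra hsgD
  have hlin' : ∀ r ∈ insert sg D, IsLinOrder r := by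
    intro r hr
    rcases hr with rfl | hr
    · exact hsg
    · exact hD r hr
  exact hmax.2 (insert sg D) hlin' (Set.ssubset_insert hsgD)
    (sen_condorcet _ hlin' hvr)

section NB

variable [DecidableEq A]

/-- `x ⊵ y`: `x` is never at the bottom of the triple `{a,x,y}` in `D`. -/
def NBa (D : Set (A → A → Prop)) (a x y : A) : Prop :=
  x ≠ a ∧ y ≠ a ∧ x ≠ y ∧ NeverBottom D {a, x, y} x

/-- `x ▷ y`: strict version of `⊵`. -/
def Tri (D : Set (A → A → Prop)) (a x y : A) : Prop :=
  NBa D a x y ∧ ¬ NBa D a y x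

omit [DecidableEq A] in
lemma nb_wit {D : Set (A → A → Prop)} {r : A → A → Prop} (hr : r ∈ D)
    (hlin : IsLinOrder r) {T : Finset A} {x : A} (h : NeverBottom D T x) :
    ∃ y ∈ T, y ≠ x ∧ r x y := by
  have h1 := h r hr
  push_neg at h1
  obtain ⟨y, hy, hyx, hnr⟩ := h1
  exact ⟨y, hy, hyx, (lin_total hlin (Ne.symm hyx)).resolve_right hnr⟩

omit [DecidableEq A] in
lemma not_nb_wit {D : Set (A → A → Prop)} {T : Finset A} {x : A}
    (h : ¬ NeverBottom D T x) : ∃ r ∈ D, ∀ y ∈ T, y ≠ x → r y x := by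
  unfold NeverBottom at h
  push_neg at h
  exact h

/-- If some order in `D` puts `t` below both `a` and `y`, then `¬ t ⊵ y`. -/
lemma not_nba {D : Set (A → A → Prop)} {a t y : A} {r' : A → A → Prop} (hr' : r' ∈ D)
    (h1 : r' a t) (h2 : r' y t) : ¬ NBa D a t y := by
  rintro ⟨-, -, -, hnb⟩
  refine hnb r' hr' ?_
  intro w hw hwt
  rcases (by simpa using hw : w = a ∨ w = t ∨ w = y) with rfl | rfl | rfl
  · exact h1
  · exact absurd rfl hwt
  · exact h2

/-- Totality of `⊵` (uses that `a` is a bottom of some order in `D`). -/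
lemma nba_total {D : Set (A → A → Prop)} (hsp : IsArrowSP D) {a x y : A}
    (ha : ∃ ra ∈ D, IsBotOf ra a)
    (hx : x ≠ a) (hy : y ≠ a) (hxy : x ≠ y) : NBa D a x y ∨ NBa D a y x := by
  obtain ⟨z, hzT, hz⟩ := hsp {a, x, y} (tricard hx hy hxy)
  obtain ⟨ra, hraD, hra⟩ := ha
  have hza : z ≠ a := by
    rintro rfl
    exact hz ra hraD (fun w _ hwa => hra w hwa)
  rcases (by simpa using hzT : z = a ∨ z = x ∨ z = y) with rfl | rfl | rfl
  · exact absurd rfl hza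
  · exact Or.inl ⟨hx, hy, hxy, hz⟩
  · refine Or.inr ⟨hy, hx, Ne.symm hxy, ?_⟩
    rwa [Finset.pair_comm z x]

/-- Key step: if `y` is never-bottom on the `a`-free triple `{x,y,t}` and `x ▷ y`,
then `y ▷ t`. -/
lemma tri_step {D : Set (A → A → Prop)} (hD : ∀ r ∈ D, IsLinOrder r)
    (hsp : IsArrowSP D) {a x y t : A} (ha : ∃ ra ∈ D, IsBotOf ra a)
    (hx : x ≠ a) (hy : y ≠ a) (ht : t ≠ a) (hxy : x ≠ y) (hxt : x ≠ t) (hyt : y ≠ t)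
    (hTri : Tri D a x y) (hNB : NeverBottom D ({x, y, t} : Finset A) y) :
    Tri D a y t := by
  obtain ⟨r', hr'D, hw⟩ := not_nb_wit
    (show ¬ NeverBottom D {a, y, x} y from fun hnb => hTri.2 ⟨hy, hx, Ne.symm hxy, hnb⟩)
  have hay : r' a y := hw a (by simp) (Ne.symm hy)
  have hxy' : r' x y := hw x (by simp) hxy
  have hlin' := hD r' hr'D
  have h3 := hNB r' hr'D
  have hyt' : r' y t := by
    by_contra hc
    have hty : r' t y := (lin_total hlin' hyt).resolve_left hc
    refine h3 ?_
    intro w hw' hwy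
    rcases (by simpa using hw' : w = x ∨ w = y ∨ w = t) with rfl | rfl | rfl
    · exact hxy'
    · exact absurd rfl hwy
    · exact hty
  have h5 : ¬ NBa D a t y := not_nba hr'D (lin_trans hlin' hay hyt') hyt'
  exact ⟨(nba_total hsp ha hy ht hyt).resolve_right h5, h5⟩

/-- Mixed transitivity: `m ⊵ z` and `z ▷ u` imply `m ▷ u`. -/
lemma tri_mix {D : Set (A → A → Prop)} (hD : ∀ r ∈ D, IsLinOrder r)
    (hsp : IsArrowSP D) {a m z u : A} (ha : ∃ ra ∈ D, IsBotOf ra a)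
    (hmu : m ≠ u) (hua : u ≠ a) (hma : m ≠ a)
    (h1 : NBa D a m z) (h2 : Tri D a z u) : Tri D a m u := by
  obtain ⟨r', hr'D, hw⟩ := not_nb_wit
    (show ¬ NeverBottom D {a, u, z} u from
      fun hnb => h2.2 ⟨hua, h2.1.1, (h2.1.2.2.1).symm, hnb⟩)
  have hau : r' a u := hw a (by simp) (Ne.symm hua)
  have hzu : r' z u := hw z (by simp) h2.1.2.2.1
  have hlin' := hD r' hr'D
  have h5 : ¬ NBa D a u m := by
    rintro ⟨-, -, -, hnb⟩
    have h6 := hnb r' hr'D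
    have hum : r' u m := by
      by_contra hc
      refine h6 ?_
      intro w hw' hwu
      rcases (by simpa using hw' : w = a ∨ w = u ∨ w = m) with rfl | rfl | rfl
      · exact hau
      · exact absurd rfl hwu
      · exact (lin_total hlin' hmu).resolve_right hc
    exact not_nba hr'D (lin_trans hlin' hau hum) (lin_trans hlin' hzu hum) h1
  exact ⟨(nba_total hsp ha hma hua hmu).resolve_right h5, h5⟩

/-- `y ▷ b` for every `y ∉ {a,b}` when `a, b` are bottoms of orders in `D`. -/
lemma tri_bot {D : Set (A → A → Prop)} (hsp : IsArrowSP D) {a b : A}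
    (ha : ∃ ra ∈ D, IsBotOf ra a) (hb : ∃ rb ∈ D, IsBotOf rb b) (hab : a ≠ b)
    {y : A} (hy : y ≠ a) (hyb : y ≠ b) : Tri D a y b := by
  obtain ⟨ra, hraD, hra⟩ := ha
  obtain ⟨rb, hrbD, hrb⟩ := hb
  obtain ⟨z, hzT, hz⟩ := hsp {a, y, b} (tricard hy (Ne.symm hab) hyb)
  have hza : z ≠ a := by
    rintro rfl
    exact hz ra hraD (fun w _ hwa => hra w hwa)
  have hzb : z ≠ b := by
    rintro rfl
    exact hz rb hrbD (fun w _ hwb => hrb w hwb)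
  have hzy : z = y := by
    rcases (by simpa using hzT : z = a ∨ z = y ∨ z = b) with rfl | h | rfl
    · exact absurd rfl hza
    · exact h
    · exact absurd rfl hzb
  subst hzy
  have h5 : ¬ NBa D a b z := by
    rintro ⟨-, -, -, hnb⟩
    exact hnb rb hrbD (fun w _ hwb => hrb w hwb)
  exact ⟨⟨hy, Ne.symm hab, hyb, hz⟩, h5⟩

end NB

/-- Inserting an order that ranks `z` above some element of `T` preserves the
never-bottom property of `z`. -/
lemma nb_insert {D : Set (A → A → Prop)} {sg : A → A → Prop} {T : Finset A} {z : A}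
    (hsg : IsLinOrder sg) (hNB : NeverBottom D T z)
    (hwit : ∃ c ∈ T, c ≠ z ∧ sg z c) : NeverBottom (insert sg D) T z := by
  obtain ⟨c, hcT, hcz, hszc⟩ := hwit
  intro p hp
  rcases hp with rfl | hpD
  · intro hall
    exact lin_asymm hsg hszc (hall c hcT hcz)
  · exact hNB p hpD

/-- Move `a` to the top of `r`. -/
def mtt (a : A) (r : A → A → Prop) : A → A → Prop :=
  fun p q => (p = a ∧ q ≠ a) ∨ (p ≠ a ∧ q ≠ a ∧ r p q)

lemma mtt_lin {r : A → A → Prop} (h : IsLinOrder r) (a : A) : IsLinOrder (mtt a r) := by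
  have htr : IsTrichotomous A (mtt a r) := ⟨by
    intro p q
    suffices H : mtt a r p q ∨ p = q ∨ mtt a r q p from
      fun h1 h2 => H.elim (fun h => absurd h h1) (fun H => H.elim id (fun h => absurd h h2))
    by_cases hpq : p = q
    · exact Or.inr (Or.inl hpq)
    by_cases hp : p = a
    · subst hp
      exact Or.inl (Or.inl ⟨rfl, fun e => hpq e.symm⟩)
    by_cases hq : q = a
    · subst hq
      exact Or.inr (Or.inr (Or.inl ⟨rfl, hp⟩))
    rcases lin_total h hpq with h1 | h1
    · exact Or.inl (Or.inr ⟨hp, hq, h1⟩)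
    · exact Or.inr (Or.inr (Or.inr ⟨hq, hp, h1⟩))⟩
  have hirr : IsIrrefl A (mtt a r) := ⟨by
    rintro p (⟨rfl, hne⟩ | ⟨-, -, hr⟩)
    · exact hne rfl
    · exact lin_irrefl h p hr⟩
  have htrans : IsTrans A (mtt a r) := ⟨by
    rintro p q s (⟨rfl, hq⟩ | ⟨hp, hq, h1⟩) (⟨he, hs⟩ | ⟨hq', hs, h2⟩)
    · exact absurd he hq
    · exact Or.inl ⟨rfl, hs⟩
    · exact absurd he hq
    · exact Or.inr ⟨hp, hs, lin_trans h h1 h2⟩⟩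
  haveI := htr
  haveI := hirr
  haveI := htrans
  haveI : IsStrictOrder A (mtt a r) := ⟨⟩
  exact ⟨⟩

lemma comp_lin {r : A → A → Prop} (h : IsLinOrder r) (e : A ≃ A) :
    IsLinOrder (fun p q => r (e p) (e q)) := by
  have htr : IsTrichotomous A (fun p q => r (e p) (e q)) := ⟨by
    intro p q
    suffices H : r (e p) (e q) ∨ p = q ∨ r (e q) (e p) from
      fun h1 h2 => H.elim (fun h => absurd h h1) (fun H => H.elim id (fun h => absurd h h2))
    rcases (show r (e p) (e q) ∨ e p = e q ∨ r (e q) (e p) from (em (e p = e q)).elim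
      (fun hh => Or.inr (Or.inl hh))
      (fun hh => (lin_total h hh).elim Or.inl (fun h' => Or.inr (Or.inr h'))))
      with h1 | h1 | h1
    · exact Or.inl h1
    · exact Or.inr (Or.inl (e.injective h1))
    · exact Or.inr (Or.inr h1)⟩
  have hirr : IsIrrefl A (fun p q => r (e p) (e q)) := ⟨fun p => lin_irrefl h (e p)⟩
  have htrans : IsTrans A (fun p q => r (e p) (e q)) :=
    ⟨fun _ _ _ h1 h2 => lin_trans h h1 h2⟩
  haveI := htr
  haveI := hirr
  haveI := htrans
  haveI : IsStrictOrder A (fun p q => r (e p) (e q)) := ⟨⟩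
  exact ⟨⟩

lemma D_nonempty [Fintype A] {D : Set (A → A → Prop)} (hmax : IsMaximalCondorcet D) :
    D.Nonempty := by
  classical
  rw [Set.nonempty_iff_ne_empty]
  intro hDe
  let e := Fintype.equivFin A
  set r0 : A → A → Prop := fun x y => e x < e y with hr0def
  have r0lin : IsLinOrder r0 := by
    have htr : IsTrichotomous A r0 := ⟨by
      intro p q
      suffices H : r0 p q ∨ p = q ∨ r0 q p from
        fun h1 h2 => H.elim (fun h => absurd h h1) (fun H => H.elim id (fun h => absurd h h2))
      rcases lt_trichotomy (e p) (e q) with h | h | h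
      · exact Or.inl h
      · exact Or.inr (Or.inl (e.injective h))
      · exact Or.inr (Or.inr h)⟩
    have hirr : IsIrrefl A r0 := ⟨fun p => lt_irrefl _⟩
    have htrans : IsTrans A r0 := ⟨fun _ _ _ h1 h2 => lt_trans h1 h2⟩
    haveI := htr
    haveI := hirr
    haveI := htrans
    haveI : IsStrictOrder A r0 := ⟨⟩
    exact ⟨⟩
  have hlin1 : ∀ r' ∈ ({r0} : Set (A → A → Prop)), IsLinOrder r' := by
    intro r' hr'
    rw [Set.mem_singleton_iff] at hr'
    subst hr'
    exact r0lin
  have hvr : ∀ T : Finset A, T.card = 3 → ∃ x ∈ T,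
      NeverTop {r0} T x ∨ NeverMiddle {r0} T x ∨ NeverBottom {r0} T x := by
    intro T hT3
    have hTne : (↑T : Set A).Nonempty := by
      obtain ⟨x, hx⟩ := Finset.card_pos.mp (show 0 < T.card by omega)
      exact ⟨x, hx⟩
    obtain ⟨mB, hmT, hmin⟩ := rel_min (s := r0) (fun h1 h2 => lin_trans r0lin h1 h2)
      (lin_irrefl r0lin) _ hTne
    obtain ⟨y0, hy0T, hy0⟩ := Finset.exists_mem_ne (show 1 < T.card by omega) mB
    refine ⟨mB, hmT, Or.inr (Or.inr ?_)⟩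
    intro p hp hall
    rw [Set.mem_singleton_iff] at hp
    subst hp
    exact hmin y0 hy0T (hall y0 hy0T hy0)
  exact hmax.2 {r0} hlin1 (by rw [hDe]; exact Set.empty_ssubset.mpr ⟨r0, rfl⟩)
    (sen_condorcet _ hlin1 hvr)

lemma exists_two_bottoms [Fintype A] [DecidableEq A] (hA : 2 ≤ Fintype.card A)
    {D : Set (A → A → Prop)} (hD : ∀ r ∈ D, IsLinOrder r)
    (hmax : IsMaximalCondorcet D) (hsp : IsArrowSP D) :
    ∃ a b : A, a ≠ b ∧ (∃ ra ∈ D, IsBotOf ra a) ∧ (∃ rb ∈ D, IsBotOf rb b) := by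
  classical
  have hNA : Nonempty A := Fintype.card_pos_iff.mp (by omega)
  obtain ⟨r0, hr0⟩ := D_nonempty hmax
  have hr0lin := hD r0 hr0
  obtain ⟨c, hc⟩ := exists_bot hr0lin
  by_cases hsame : ∀ r ∈ D, IsBotOf r c
  · exfalso
    set sg := mtt c r0 with hsgdef
    have sglin : IsLinOrder sg := mtt_lin hr0lin c
    have hvr : ∀ T : Finset A, T.card = 3 → ∃ x ∈ T,
        NeverTop (insert sg D) T x ∨ NeverMiddle (insert sg D) T x ∨
          NeverBottom (insert sg D) T x := by
      intro T hT3
      by_cases hcT : c ∈ T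
      · refine ⟨c, hcT, Or.inr (Or.inl ?_)⟩
        rintro p hp ⟨y, hyT, z, hzT, hyc, hzc, h1, h2⟩
        rcases hp with rfl | hpD
        · rcases h1 with ⟨-, hcc⟩ | ⟨-, hcc, -⟩ <;> exact hcc rfl
        · exact lin_asymm (hD p hpD) (hsame p hpD z hzc) h2
      · obtain ⟨z, hzT, hz⟩ := hsp T hT3
        obtain ⟨y0, hy0T, hy0z, h⟩ := nb_wit hr0 hr0lin hz
        have hzy0 : sg z y0 :=
          Or.inr ⟨fun e' => hcT (e' ▸ hzT), fun e' => hcT (e' ▸ hy0T), h⟩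
        exact ⟨z, hzT, Or.inr (Or.inr (nb_insert sglin hz ⟨y0, hy0T, hy0z, hzy0⟩))⟩
    have hsgD : sg ∈ D := mem_of_compat hD hmax sglin hvr
    have hbot := hsame sg hsgD
    obtain ⟨d, hdc⟩ := Fintype.exists_ne_of_one_lt_card (by omega) c
    exact lin_asymm sglin (show sg c d from Or.inl ⟨rfl, hdc⟩) (hbot d hdc)
  · push_neg at hsame
    obtain ⟨r1, hr1D, hr1⟩ := hsame
    obtain ⟨d, hd⟩ := exists_bot (hD r1 hr1D)
    have hdc : d ≠ c := by
      rintro rfl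
      exact hr1 hd
    exact ⟨c, d, Ne.symm hdc, ⟨r0, hr0, hc⟩, ⟨r1, hr1D, hd⟩⟩

/-- Main construction: an order with `a` on top and `b` at the bottom belongs
to any maximal Arrow-single-peaked Condorcet domain having bottoms `a` and `b`. -/
lemma exists_extremal [Fintype A] [DecidableEq A] {D : Set (A → A → Prop)}
    (hD : ∀ r ∈ D, IsLinOrder r) (hmax : IsMaximalCondorcet D) (hsp : IsArrowSP D)
    {a b : A} (hab : a ≠ b)
    (ha : ∃ ra ∈ D, IsBotOf ra a) (hb : ∃ rb ∈ D, IsBotOf rb b) :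
    ∃ w ∈ D, (∀ y, y ≠ a → w a y) ∧ (∀ y, y ≠ b → w y b) := by
  classical
  obtain ⟨ra0, hra0D, hra0⟩ := ha
  have haD : ∃ ra ∈ D, IsBotOf ra a := ⟨ra0, hra0D, hra0⟩
  let V : (A → A → Prop) → Set (A × A) :=
    fun r => {pq : A × A | Tri D a pq.1 pq.2 ∧ r pq.2 pq.1}
  have main : ∀ n : ℕ, ∀ r, r ∈ D → IsBotOf r a → (V r).ncard ≤ n →
      ∃ r' ∈ D, IsBotOf r' a ∧ ∀ p q, Tri D a p q → ¬ r' q p := by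
    intro n
    induction n with
    | zero =>
      intro r hrD hra hcard
      refine ⟨r, hrD, hra, fun p q ht hrqp => ?_⟩
      have hemp : V r = ∅ := (Set.ncard_eq_zero (Set.toFinite _)).mp (Nat.le_zero.mp hcard)
      have hm : ((p, q) : A × A) ∈ V r := ⟨ht, hrqp⟩
      rw [hemp] at hm
      exact hm
    | succ n ih =>
      intro r hrD hra hcard
      by_cases hV : V r = ∅
      · refine ⟨r, hrD, hra, fun p q ht hrqp => ?_⟩
        have hm : ((p, q) : A × A) ∈ V r := ⟨ht, hrqp⟩
        rw [hV] at hm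
        exact hm
      · have hlin := hD r hrD
        obtain ⟨⟨p0, q0⟩, hvp⟩ := Set.nonempty_iff_ne_empty.mpr hV
        have hbadne : {z : A | ∃ v, r v z ∧ Tri D a z v}.Nonempty :=
          ⟨p0, q0, hvp.2, hvp.1⟩
        obtain ⟨x, hxbad, hxmax⟩ := rel_min (s := r) (fun h1 h2 => lin_trans hlin h1 h2)
          (lin_irrefl hlin) _ hbadne
        obtain ⟨v0, hv0⟩ := hxbad
        have hSne : {v : A | r v x ∧ Tri D a x v}.Nonempty := ⟨v0, hv0.1, hv0.2⟩
        obtain ⟨y, hyS, hymin⟩ := rel_min (s := fun p q => r q p)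
          (fun h1 h2 => lin_trans hlin h2 h1) (lin_irrefl hlin) _ hSne
        obtain ⟨hyx, hTxy⟩ := hyS
        have hx_a : x ≠ a := hTxy.1.1
        have hy_a : y ≠ a := hTxy.1.2.1
        have hxy_ne : x ≠ y := hTxy.1.2.2.1
        have hadj : ∀ m', ¬ (r y m' ∧ r m' x) := by
          rintro m' ⟨h1, h2⟩
          have hmx : m' ≠ x := fun e' => lin_irrefl hlin x (e' ▸ h2)
          have hmy : m' ≠ y := fun e' => lin_irrefl hlin y (e' ▸ h1)
          have hma : m' ≠ a := by
            rintro rfl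
            exact lin_asymm hlin (hra x hx_a) h2
          have hnt : ¬ Tri D a x m' := fun ht => hymin m' ⟨h2, ht⟩ h1
          have hmz : NBa D a m' x := by
            by_cases hcc : NBa D a m' x
            · exact hcc
            · exact absurd
                ⟨(nba_total hsp haD hx_a hma (Ne.symm hmx)).resolve_right hcc, hcc⟩ hnt
          have hTm : Tri D a m' y := tri_mix hD hsp haD hmy hy_a hma hmz hTxy
          exact hxmax m' ⟨y, h1, hTm⟩ h2
        set e := Equiv.swap x y with hedef
        set sg : A → A → Prop := fun p q => r (e p) (e q) with hsgdef
        have sglin : IsLinOrder sg := comp_lin hlin e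
        have hea : e a = a := Equiv.swap_apply_of_ne_of_ne (Ne.symm hx_a) (Ne.symm hy_a)
        have hex : e x = y := Equiv.swap_apply_left x y
        have hey : e y = x := Equiv.swap_apply_right x y
        have sgbot : IsBotOf sg a := by
          intro w hw
          show r (e w) (e a)
          rw [hea]
          refine hra (e w) ?_
          intro hcon
          exact hw (e.injective (by rw [hcon, hea]))
        have key1 : ∀ q, q ≠ x → q ≠ y → (r y q ↔ r x q) := by
          intro q hqx hqy
          constructor
          · intro h
            exact (lin_total hlin (fun e' => hqx e'.symm)).resolve_right
              (fun h2 => hadj q ⟨h, h2⟩)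
          · intro h
            exact lin_trans hlin hyx h
        have key2 : ∀ p, p ≠ x → p ≠ y → (r p x ↔ r p y) := by
          intro p hpx hpy
          constructor
          · intro h
            exact (lin_total hlin hpy).resolve_right (fun h2 => hadj p ⟨h2, h⟩)
          · intro h
            exact lin_trans hlin h hyx
        have hcmp : ∀ p q, ¬ (p = x ∧ q = y) → ¬ (p = y ∧ q = x) → (sg p q ↔ r p q) := by
          intro p q hpq1 hpq2
          show r (e p) (e q) ↔ r p q
          by_cases hpx : p = x
          · by_cases hqy : q = y
            · exact absurd ⟨hpx, hqy⟩ hpq1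
            by_cases hqx : q = x
            · rw [hpx, hqx, hex]
              exact iff_of_false (lin_irrefl hlin y) (lin_irrefl hlin x)
            · rw [hpx, hex, show e q = q from Equiv.swap_apply_of_ne_of_ne hqx hqy]
              exact key1 q hqx hqy
          by_cases hpy : p = y
          · by_cases hqx : q = x
            · exact absurd ⟨hpy, hqx⟩ hpq2
            by_cases hqy : q = y
            · rw [hpy, hqy, hey]
              exact iff_of_false (lin_irrefl hlin x) (lin_irrefl hlin y)
            · rw [hpy, hey, show e q = q from Equiv.swap_apply_of_ne_of_ne hqx hqy]
              exact (key1 q hqx hqy).symm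
          have hep : e p = p := Equiv.swap_apply_of_ne_of_ne hpx hpy
          by_cases hqx : q = x
          · rw [hqx, hep, hex]
            exact (key2 p hpx hpy).symm
          by_cases hqy : q = y
          · rw [hqy, hep, hey]
            exact key2 p hpx hpy
          · rw [hep, show e q = q from Equiv.swap_apply_of_ne_of_ne hqx hqy]
        have hvrsg : ∀ T : Finset A, T.card = 3 → ∃ t ∈ T,
            NeverTop (insert sg D) T t ∨ NeverMiddle (insert sg D) T t ∨
              NeverBottom (insert sg D) T t := by
          intro T hT3
          by_cases hxyT : x ∈ T ∧ y ∈ T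
          · obtain ⟨t, htx, hty, rfl⟩ := exists_third hT3 hxyT.1 hxyT.2 hxy_ne
            obtain ⟨z, hzT, hz⟩ := hsp _ hT3
            have hza : z ≠ a := by
              rintro rfl
              exact hz r hrD (fun w _ hwa => hra w hwa)
            rcases (by simpa using hzT : z = x ∨ z = y ∨ z = t) with h | h | h
            · refine ⟨x, by simp, Or.inr (Or.inr (nb_insert sglin (h ▸ hz)
                ⟨y, by simp, Ne.symm hxy_ne, ?_⟩))⟩
              show r (e x) (e y)
              rw [hex, hey]
              exact hyx
            · have hz' : NeverBottom D {x, y, t} y := h ▸ hz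
              by_cases hta : t = a
              · refine ⟨y, by simp, Or.inr (Or.inr (nb_insert sglin hz'
                  ⟨t, by simp, ?_, ?_⟩))⟩
                · rw [hta]
                  exact Ne.symm hy_a
                · show r (e y) (e t)
                  rw [hey, hta, hea]
                  exact hra x hx_a
              · by_cases hrxt : r x t
                · refine ⟨y, by simp, Or.inr (Or.inr (nb_insert sglin hz'
                    ⟨t, by simp, hty, ?_⟩))⟩
                  show r (e y) (e t)
                  rw [hey, show e t = t from Equiv.swap_apply_of_ne_of_ne htx hty]
                  exact hrxt
                · have htx' : r t x := (lin_total hlin (Ne.symm htx)).resolve_left hrxt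
                  have hty' : r t y := by
                    rcases lin_total hlin (show t ≠ y from fun e' => hty e') with h1 | h1
                    · exact h1
                    · exact absurd ⟨h1, htx'⟩ (hadj t)
                  have hTyt : Tri D a y t := tri_step hD hsp haD hx_a hy_a hta hxy_ne
                    (Ne.symm htx) (Ne.symm hty) hTxy hz'
                  exact absurd hyx (hxmax y ⟨t, hty', hTyt⟩)
            · have hz' : NeverBottom D {x, y, t} t := h ▸ hz
              by_cases hrtx : r t x
              · have hrty : r t y := by
                  rcases lin_total hlin (show t ≠ y from fun e' => hty e') with h1 | h1
                  · exact h1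
                  · exact absurd ⟨h1, hrtx⟩ (hadj t)
                refine ⟨t, by simp, Or.inr (Or.inr (nb_insert sglin hz'
                  ⟨x, by simp, Ne.symm htx, ?_⟩))⟩
                show r (e t) (e x)
                rw [hex, show e t = t from Equiv.swap_apply_of_ne_of_ne htx hty]
                exact hrty
              · have hrxt : r x t := (lin_total hlin (Ne.symm htx)).resolve_right hrtx
                have hryt : r y t := lin_trans hlin hyx hrxt
                refine absurd ?_ (hz' r hrD)
                intro w hw hwt
                rcases (by simpa using hw : w = x ∨ w = y ∨ w = t) with rfl | rfl | rfl
                · exact hrxt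
                · exact hryt
                · exact absurd rfl hwt
          · obtain ⟨z, hzT, hz⟩ := hsp T hT3
            obtain ⟨y0, hy0T, hy0z, hrzy0⟩ := nb_wit hrD hlin hz
            have hsgz : sg z y0 :=
              (hcmp z y0 (by rintro ⟨rfl, rfl⟩; exact hxyT ⟨hzT, hy0T⟩)
                (by rintro ⟨rfl, rfl⟩; exact hxyT ⟨hy0T, hzT⟩)).mpr hrzy0
            exact ⟨z, hzT, Or.inr (Or.inr (nb_insert sglin hz ⟨y0, hy0T, hy0z, hsgz⟩))⟩
        have hsgD : sg ∈ D := mem_of_compat hD hmax sglin hvrsg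
        have hsub : V sg ⊆ V r := by
          rintro ⟨p, q⟩ ⟨hT, hsgqp⟩
          refine ⟨hT, ?_⟩
          by_cases h1 : q = x ∧ p = y
          · obtain ⟨rfl, rfl⟩ := h1
            exact absurd hTxy.1 hT.2
          by_cases h2 : q = y ∧ p = x
          · obtain ⟨rfl, rfl⟩ := h2
            have h' : r (e q) (e p) := hsgqp
            rw [hey, hex] at h'
            exact absurd h' (lin_asymm hlin hyx)
          · rwa [hcmp q p h1 h2] at hsgqp
        have hmemxy : ((x, y) : A × A) ∈ V r := ⟨hTxy, hyx⟩
        have hnot : ((x, y) : A × A) ∉ V sg := by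
          rintro ⟨-, hsgyx⟩
          have h' : r (e y) (e x) := hsgyx
          rw [hey, hex] at h'
          exact lin_asymm hlin hyx h'
        have hss : V sg ⊂ V r := ⟨hsub, fun hsub2 => hnot (hsub2 hmemxy)⟩
        have hlt : (V sg).ncard < (V r).ncard := Set.ncard_lt_ncard hss (Set.toFinite _)
        exact ih sg hsgD sgbot (by omega)
  obtain ⟨r, hrD, hra, hfree⟩ := main ((V ra0).ncard) ra0 hra0D hra0 le_rfl
  have hlin := hD r hrD
  have wlin : IsLinOrder (mtt a r) := mtt_lin hlin a
  have hvrw : ∀ T : Finset A, T.card = 3 → ∃ t ∈ T,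
      NeverTop (insert (mtt a r) D) T t ∨ NeverMiddle (insert (mtt a r) D) T t ∨
        NeverBottom (insert (mtt a r) D) T t := by
    intro T hT3
    by_cases haT : a ∈ T
    · obtain ⟨p, q, hp, hq, hpq, rfl⟩ := exists_pair hT3 haT
      obtain ⟨z, hzT, hz⟩ := hsp _ hT3
      have hza : z ≠ a := by
        rintro rfl
        exact hz r hrD (fun w' _ hwa => hra w' hwa)
      have key : ∀ p' q', p' ≠ a → q' ≠ a → p' ≠ q' →
          ({a, p', q'} : Finset A) = {a, p, q} →
          NeverBottom D {a, p', q'} p' → ∃ t ∈ ({a, p, q} : Finset A),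
            NeverTop (insert (mtt a r) D) {a, p, q} t ∨
              NeverMiddle (insert (mtt a r) D) {a, p, q} t ∨
                NeverBottom (insert (mtt a r) D) {a, p, q} t := by
        intro p' q' hp' hq' hpq' hTeq hnb
        by_cases hrpq : r p' q'
        · refine ⟨p', ?_, Or.inr (Or.inr (nb_insert wlin (hTeq ▸ hnb)
            ⟨q', ?_, Ne.symm hpq', Or.inr ⟨hp', hq', hrpq⟩⟩))⟩
          · rw [← hTeq]; simp
          · rw [← hTeq]; simp
        · have hrqp : r q' p' := (lin_total hlin hpq').resolve_left hrpq
          by_cases htie : NBa D a q' p'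
          · refine ⟨q', ?_, Or.inr (Or.inr (nb_insert wlin ?_
              ⟨p', ?_, hpq', Or.inr ⟨hq', hp', hrqp⟩⟩))⟩
            · rw [← hTeq]; simp
            · have h6 := htie.2.2.2
              rwa [Finset.pair_comm q' p', hTeq] at h6
            · rw [← hTeq]; simp
          · exact absurd hrqp (hfree p' q' ⟨⟨hp', hq', hpq', hnb⟩, htie⟩)
      rcases (by simpa using hzT : z = a ∨ z = p ∨ z = q) with h | h | h
      · exact absurd h hza
      · exact key p q hp hq hpq rfl (h ▸ hz)
      · exact key q p hq hp (Ne.symm hpq) (by rw [Finset.pair_comm q p])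
          (by rw [Finset.pair_comm q p]; exact h ▸ hz)
    · obtain ⟨z, hzT, hz⟩ := hsp T hT3
      obtain ⟨y0, hy0T, hy0z, hrzy0⟩ := nb_wit hrD hlin hz
      have hz_a : z ≠ a := fun e' => haT (e' ▸ hzT)
      have hy0a : y0 ≠ a := fun e' => haT (e' ▸ hy0T)
      exact ⟨z, hzT, Or.inr (Or.inr (nb_insert wlin hz
        ⟨y0, hy0T, hy0z, Or.inr ⟨hz_a, hy0a, hrzy0⟩⟩))⟩
  have hwD : mtt a r ∈ D := mem_of_compat hD hmax wlin hvrw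
  refine ⟨mtt a r, hwD, ?_, ?_⟩
  · intro y hy
    exact Or.inl ⟨rfl, hy⟩
  · intro y hy
    by_cases hya : y = a
    · exact Or.inl ⟨hya, Ne.symm hab⟩
    · refine Or.inr ⟨hya, Ne.symm hab, ?_⟩
      have htb : Tri D a y b := tri_bot hsp haD hb hab hya hy
      exact (lin_total hlin hy).resolve_right (hfree y b htb)

end ASPaux

/-- every maximal Condorcet domain on a finite set with at least
two elements that is Arrow's single-peaked contains two extremal orders: orders
`p` and `q` with `p` ranking `a` first and `b` last and `q` ranking `b` first
and `a` last, for some distinct `a, b`. -/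
theorem arrowSP_extremal_orders {A : Type*} [Fintype A]
    (hA : 2 ≤ Fintype.card A)
    (D : Set (A → A → Prop)) (hD : ∀ r ∈ D, IsLinOrder r)
    (hmax : IsMaximalCondorcet D) (hsp : IsArrowSP D) :
    ∃ a b : A, a ≠ b ∧ ∃ p ∈ D, ∃ q ∈ D,
      ((∀ y, y ≠ a → p a y) ∧ (∀ y, y ≠ b → p y b)) ∧
      ((∀ y, y ≠ b → q b y) ∧ (∀ y, y ≠ a → q y a)) := by
  classical
  obtain ⟨a, b, hab, ha, hb⟩ := ASPaux.exists_two_bottoms hA hD hmax hsp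
  obtain ⟨p, hpD, hp1, hp2⟩ := ASPaux.exists_extremal hD hmax hsp hab ha hb
  obtain ⟨q, hqD, hq1, hq2⟩ := ASPaux.exists_extremal hD hmax hsp (Ne.symm hab) hb ha
  exact ⟨a, b, hab, p, hpD, q, hqD, ⟨hp1, hp2⟩, ⟨hq1, hq2⟩⟩
end
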